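/- arXiv:2206.12600 — 8 statements merged into one kernel-verified Lean document; each statement's English description precedes it below -/
import Mathlib

section
/- For any two strings x and y over the same alphabet, x and y pal-match if and only if ssp_x = ssp_y (in particular, equality of the ssp-encodings forces |x| = |y|). -/
open scoped ENat

variable {α : Type*}

/-- `w` is a palindrome. -/
def IsPal (w : List α) : Prop := w.reverse = w

/-- The substring `w[i..j]`, 1-indexed, inclusive; empty if `i > j`. -/
def sub (w : List α) (i j : ℕ) : List α := (w.take j).drop (i - 1)

/-- Two strings of the same length pal-match: they agree on which substrings
`w[i..j]` (for `1 ≤ i < j ≤ |w|`) are palindromes. -/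
def PalMatch (x y : List α) : Prop :=
  x.length = y.length ∧
    ∀ i j, 1 ≤ i → i < j → j ≤ x.length → (IsPal (sub x i j) ↔ IsPal (sub y i j))

/-- `sspAt w i` : length of the shortest palindromic suffix of `w[1..i]`
of length at least 2, or `∞` if none exists. -/
noncomputable def sspAt (w : List α) (i : ℕ) : ℕ∞ :=
  sInf {ℓ : ℕ∞ | ∃ u : List α, u <:+ w.take i ∧ IsPal u ∧ 2 ≤ u.length ∧ (u.length : ℕ∞) = ℓ}

/-- The ssp-encoding of `w` as a sequence of length `|w|` over `ℕ ∪ {∞}`. -/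
noncomputable def ssp (w : List α) : List ℕ∞ :=
  (List.range w.length).map fun k => sspAt w (k + 1)

/-! ### Auxiliary machinery -/

/-- Index-level palindrome predicate: the substring of `w` starting at 0-indexed
position `a` of length `n` is a palindrome (character-wise). -/
def PalI (w : List α) (a n : ℕ) : Prop :=
  ∀ k, k < n → w[a + k]? = w[a + n - 1 - k]?

lemma palI_congr {w : List α} {a n a' n' : ℕ} (h : PalI w a n) (ha : a = a') (hn : n = n') :
    PalI w a' n' := ha ▸ hn ▸ h

lemma palI_of_le_one {w : List α} {a n : ℕ} (h : n ≤ 1) : PalI w a n := by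
  intro k hk
  have : k = 0 := by omega
  subst this
  congr 1
  omega

/-- `IsPal` of a take-drop substring is equivalent to `PalI`, when in range. -/
lemma isPal_iff_palI {w : List α} {a n : ℕ} (h : a + n ≤ w.length) :
    IsPal ((w.drop a).take n) ↔ PalI w a n := by
  set u := (w.drop a).take n with hu
  have hlen : u.length = n := by
    simp [hu]
    omega
  have hget : ∀ k, k < n → u[k]? = w[a + k]? := by
    intro k hk
    simp [hu, List.getElem?_take, hk, List.getElem?_drop]
  constructor
  · intro hp k hk
    have h1 : u.reverse[k]? = u[k]? := by rw [hp]
    have h2 : u.reverse[k]? = u[n - 1 - k]? := by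
      rw [List.getElem?_reverse (by omega : k < u.length), hlen]
    have h3 : u[n-1-k]? = w[a + (n-1-k)]? := hget _ (by omega)
    have h4 : a + (n - 1 - k) = a + n - 1 - k := by omega
    rw [← hget k hk, ← h1, h2, h3, h4]
  · intro hp
    apply List.ext_getElem?
    intro k
    by_cases hk : k < n
    · have h2 : u.reverse[k]? = u[n - 1 - k]? := by
        rw [List.getElem?_reverse (by omega : k < u.length), hlen]
      rw [h2, hget _ (by omega), hget _ hk]
      have := hp k hk
      rw [this]
      congr 1
      omega
    · have e1 : u.reverse[k]? = none := by
        rw [List.getElem?_eq_none_iff]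
        simp [hlen]; omega
      have e2 : u[k]? = none := by
        rw [List.getElem?_eq_none_iff]
        omega
      rw [e1, e2]

/-- Mirror: if `w[a..a+ℓ)` is a palindrome and its suffix of length `m` is a
palindrome, then its prefix of length `m` is a palindrome. -/
lemma palI_prefix {w : List α} {a ℓ m : ℕ} (hm : m ≤ ℓ)
    (hP : PalI w a ℓ) (hS : PalI w (a + ℓ - m) m) : PalI w a m := by
  intro k hk
  have e1 := hP k (by omega)
  have e2 := hS k hk
  have e3 := hP (ℓ - m + k) (by omega)
  have i1 : a + ℓ - 1 - k = a + ℓ - m + m - 1 - k := by omega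
  have i2 : a + ℓ - m + k = a + (ℓ - m + k) := by omega
  have i3 : a + ℓ - 1 - (ℓ - m + k) = a + m - 1 - k := by omega
  rw [e1, i1, ← e2, i2, e3, i3]

/-- Inner substring of a palindrome is a palindrome. -/
lemma palI_inner {w : List α} {a ℓ : ℕ} (hP : PalI w a ℓ) : PalI w (a + 1) (ℓ - 2) := by
  rcases le_or_gt ℓ 2 with h | h
  · exact palI_of_le_one (by omega)
  intro k hk
  have e := hP (k + 1) (by omega)
  have i1 : a + 1 + k = a + (k + 1) := by omega
  have i2 : a + ℓ - 1 - (k + 1) = a + 1 + (ℓ - 2) - 1 - k := by omega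
  rw [i1, e, i2]

/-- Glue: inner palindrome + palindromic prefix and suffix of the same length `m`
(`2 ≤ m < ℓ`) force the whole to be a palindrome. -/
lemma palI_glue {w : List α} {a ℓ m : ℕ} (h2 : 2 ≤ m) (hlt : m < ℓ)
    (hI : PalI w (a + 1) (ℓ - 2)) (hS : PalI w (a + ℓ - m) m) (hT : PalI w a m) :
    PalI w a ℓ := by
  have hkey : w[a]? = w[a + ℓ - 1]? := by
    have e1 := hT 0 (by omega)
    have e2 := hI (m - 2) (by omega)
    have e3 := hS 0 (by omega)
    have i0 : a + 0 = a := by omega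
    have i1 : a + m - 1 - 0 = a + 1 + (m - 2) := by omega
    have i2 : a + 1 + (ℓ - 2) - 1 - (m - 2) = a + ℓ - m + 0 := by omega
    have i3 : a + ℓ - m + m - 1 - 0 = a + ℓ - 1 := by omega
    rw [i0] at e1
    rw [e1, i1, e2, i2, e3, i3]
  intro k hk
  rcases Nat.eq_or_lt_of_le (Nat.zero_le k) with h0 | h0
  · have i1 : a + 0 = a := by omega
    have i2 : a + ℓ - 1 - 0 = a + ℓ - 1 := by omega
    rw [← h0, i1, i2, hkey]
  rcases Nat.lt_or_ge k (ℓ - 1) with h1 | h1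
  · -- 1 ≤ k ≤ ℓ - 2 : use inner
    have e := hI (k - 1) (by omega)
    have i1 : a + k = a + 1 + (k - 1) := by omega
    have i2 : a + 1 + (ℓ - 2) - 1 - (k - 1) = a + ℓ - 1 - k := by omega
    rw [i1, e, i2]
  · -- k = ℓ - 1
    have : k = ℓ - 1 := by omega
    subst this
    have i1 : a + (ℓ - 1) = a + ℓ - 1 := by omega
    have i2 : a + ℓ - 1 - (ℓ - 1) = a := by omega
    rw [i1, i2, hkey]

/-- Palindromic suffixes of `w[1..j]` of length `ℓ` correspond to `PalI w (j-ℓ) ℓ`. -/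
lemma palSuff_iff {w : List α} {j ℓ : ℕ} (hℓ : ℓ ≤ j) (hj : j ≤ w.length) :
    (∃ u : List α, u <:+ w.take j ∧ IsPal u ∧ u.length = ℓ) ↔ PalI w (j - ℓ) ℓ := by
  have hdt : (w.take j).drop (j - ℓ) = (w.drop (j - ℓ)).take ℓ := by
    rw [List.drop_take]
    congr 1
    omega
  constructor
  · rintro ⟨u, ⟨t, ht⟩, hpal, hlen⟩
    have htl : t.length = j - ℓ := by
      have : (t ++ u).length = (w.take j).length := by rw [ht]
      simp [hlen] at this
      omega
    have : (w.take j).drop (j - ℓ) = u := by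
      rw [← ht, ← htl, List.drop_left]
    rw [hdt] at this
    rw [← isPal_iff_palI (by omega : (j - ℓ) + ℓ ≤ w.length), this]
    exact hpal
  · intro hp
    refine ⟨(w.take j).drop (j - ℓ), List.drop_suffix _ _, ?_, ?_⟩
    · rw [hdt, isPal_iff_palI (by omega : (j - ℓ) + ℓ ≤ w.length)]
      exact hp
    · simp
      omega

/-- `sub` in terms of `PalI`. -/
lemma isPal_sub_iff {w : List α} {i j : ℕ} (h1 : 1 ≤ i) (hij : i ≤ j) (hj : j ≤ w.length) :
    IsPal (sub w i j) ↔ PalI w (i - 1) (j - i + 1) := by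
  have : sub w i j = (w.drop (i-1)).take (j - i + 1) := by
    unfold sub
    rw [List.drop_take]
    congr 1
    omega
  rw [this, isPal_iff_palI (by omega)]

/-- The defining set of `sspAt`. -/
def sspSet (w : List α) (j : ℕ) : Set ℕ∞ :=
  {ℓ : ℕ∞ | ∃ u : List α, u <:+ w.take j ∧ IsPal u ∧ 2 ≤ u.length ∧ (u.length : ℕ∞) = ℓ}

lemma sspAt_eq_sInf (w : List α) (j : ℕ) : sspAt w j = sInf (sspSet w j) := rfl

lemma mem_sspSet_iff {w : List α} {j : ℕ} (hj : j ≤ w.length) {v : ℕ∞} :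
    v ∈ sspSet w j ↔ ∃ ℓ : ℕ, v = (ℓ : ℕ∞) ∧ 2 ≤ ℓ ∧ ℓ ≤ j ∧ PalI w (j - ℓ) ℓ := by
  constructor
  · rintro ⟨u, hsuf, hpal, h2, hv⟩
    have hle : u.length ≤ j := by
      have := hsuf.length_le
      simp at this
      omega
    exact ⟨u.length, hv.symm, h2, hle, (palSuff_iff hle hj).1 ⟨u, hsuf, hpal, rfl⟩⟩
  · rintro ⟨ℓ, rfl, h2, hle, hp⟩
    obtain ⟨u, hsuf, hpal, hlen⟩ := (palSuff_iff hle hj).2 hp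
    exact ⟨u, hsuf, hpal, by omega, by rw [hlen]⟩

/-- Key step: from equal ssp values, palindromic suffixes transfer, by strong
induction on the end position. -/
lemma transfer {x y : List α}
    (hssp : ∀ j, 1 ≤ j → j ≤ x.length → sspAt x j = sspAt y j)
    (hlen : x.length = y.length) :
    ∀ j, ∀ ℓ, 2 ≤ ℓ → ℓ ≤ j → j ≤ x.length → PalI x (j - ℓ) ℓ → PalI y (j - ℓ) ℓ := by
  intro j
  induction j using Nat.strong_induction_on with
  | _ j IH =>
    intro ℓ h2 hℓj hjn hx
    -- membership of ℓ in the x-set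
    have hmemx : (ℓ : ℕ∞) ∈ sspSet x j := (mem_sspSet_iff hjn).2 ⟨ℓ, rfl, h2, hℓj, hx⟩
    have hinf_le : sspAt x j ≤ (ℓ : ℕ∞) := sInf_le hmemx
    -- the infimum is attained at some natural m
    obtain ⟨m, hm⟩ : ∃ m : ℕ, sspAt x j = (m : ℕ∞) := by
      cases h : sspAt x j with
      | top => rw [h] at hinf_le; exact absurd hinf_le (by simp)
      | coe m => exact ⟨m, rfl⟩
    have hmem_min_x : (m : ℕ∞) ∈ sspSet x j := by
      have hne : (sspSet x j).Nonempty := ⟨_, hmemx⟩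
      have := csInf_mem hne
      rw [← sspAt_eq_sInf, hm] at this
      exact this
    have hmem_min_y : (m : ℕ∞) ∈ sspSet y j := by
      have hne : (sspSet y j).Nonempty := by
        by_contra hemp
        have : sspSet y j = ∅ := Set.not_nonempty_iff_eq_empty.1 hemp
        have h0 : sspAt y j = ⊤ := by
          rw [sspAt_eq_sInf, this, sInf_empty]
        have := hssp j (by omega) hjn
        rw [hm, h0] at this
        exact absurd this (by simp)
      have := csInf_mem hne
      rw [← sspAt_eq_sInf, ← hssp j (by omega) hjn, hm] at this
      exact this
    obtain ⟨m', hmeq, hm2, hmj, hxm⟩ := (mem_sspSet_iff hjn).1 hmem_min_x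
    have hq1 : m' = m := by exact_mod_cast hmeq.symm
    rw [hq1] at hm2 hmj hxm
    obtain ⟨m'', hmeq', hm2', hmj', hym⟩ := (mem_sspSet_iff (hlen ▸ hjn)).1 hmem_min_y
    have hq2 : m'' = m := by exact_mod_cast hmeq'.symm
    rw [hq2] at hm2' hmj' hym
    -- m ≤ ℓ
    have hmℓ : m ≤ ℓ := by exact_mod_cast hm ▸ hinf_le
    rcases Nat.eq_or_lt_of_le hmℓ with heq | hlt
    · subst heq; exact hym
    -- m < ℓ : reduce
    · -- inner palindrome of x transfers at position j - 1
      have hinner_x : PalI x (j - ℓ + 1) (ℓ - 2) := palI_inner hx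
      have hinner_y : PalI y (j - ℓ + 1) (ℓ - 2) := by
        rcases Nat.lt_or_ge (ℓ - 2) 2 with hs | hs
        · exact palI_of_le_one (by omega)
        · have := IH (j - 1) (by omega) (ℓ - 2) hs (by omega) (by omega)
            (palI_congr hinner_x (by omega) rfl)
          exact palI_congr this (by omega) rfl
      -- prefix palindrome of x transfers at position j - ℓ + m
      have hpre_x : PalI x (j - ℓ) m :=
        palI_prefix (le_of_lt hlt) hx (palI_congr hxm (by omega) rfl)
      have hpre_y : PalI y (j - ℓ) m := by
        have := IH (j - ℓ + m) (by omega) m hm2 (by omega) (by omega)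
          (palI_congr hpre_x (by omega) rfl)
        exact palI_congr this (by omega) rfl
      -- glue for y
      exact palI_glue hm2 hlt hinner_y (palI_congr hym (by omega) rfl) hpre_y

/-- Two strings pal-match iff they have the same ssp-encoding
(in particular, `ssp x = ssp y` forces `|x| = |y|`). -/
theorem stmt0 {α : Type*} (x y : List α) : PalMatch x y ↔ ssp x = ssp y := by
  have hssp_iff : ∀ (x y : List α), ssp x = ssp y ↔
      (x.length = y.length ∧ ∀ j, 1 ≤ j → j ≤ x.length → sspAt x j = sspAt y j) := by
    intro x y
    constructor
    · intro h
      have hl : x.length = y.length := by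
        have := congrArg List.length h
        simpa [ssp] using this
      refine ⟨hl, fun j h1 h2 => ?_⟩
      have := congrArg (fun l => l[j - 1]?) h
      simp only [ssp, List.getElem?_map] at this
      rw [List.getElem?_range (by omega : j - 1 < x.length),
        List.getElem?_range (by omega : j - 1 < y.length)] at this
      simp at this
      have hj : j - 1 + 1 = j := by omega
      rwa [hj] at this
    · rintro ⟨hl, h⟩
      unfold ssp
      rw [hl]
      apply List.map_congr_left
      intro k hk
      simp [List.mem_range] at hk
      exact h (k+1) (by omega) (by omega)
  rw [hssp_iff]
  constructor
  · rintro ⟨hl, hmatch⟩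
    refine ⟨hl, fun j h1 hj => ?_⟩
    rw [sspAt_eq_sInf, sspAt_eq_sInf]
    congr 1
    ext v
    rw [mem_sspSet_iff hj, mem_sspSet_iff (hl ▸ hj)]
    constructor <;> rintro ⟨ℓ, rfl, h2, hle, hp⟩ <;> refine ⟨ℓ, rfl, h2, hle, ?_⟩
    · have hiff := hmatch (j - ℓ + 1) j (by omega) (by omega) hj
      rw [isPal_sub_iff (by omega) (by omega) hj,
        isPal_sub_iff (by omega) (by omega) (hl ▸ hj)] at hiff
      have := hiff.1 (palI_congr hp (by omega) (by omega))
      exact palI_congr this (by omega) (by omega)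
    · have hiff := hmatch (j - ℓ + 1) j (by omega) (by omega) hj
      rw [isPal_sub_iff (by omega) (by omega) hj,
        isPal_sub_iff (by omega) (by omega) (hl ▸ hj)] at hiff
      have := hiff.2 (palI_congr hp (by omega) (by omega))
      exact palI_congr this (by omega) (by omega)
  · rintro ⟨hl, h⟩
    refine ⟨hl, fun i j h1 hij hj => ?_⟩
    have h' : ∀ j, 1 ≤ j → j ≤ y.length → sspAt y j = sspAt x j := by
      intro j a b
      exact (h j a (by omega)).symm
    rw [isPal_sub_iff h1 (by omega) hj, isPal_sub_iff h1 (by omega) (hl ▸ hj)]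
    constructor
    · intro hp
      have := transfer h hl j (j - i + 1) (by omega) (by omega) hj
        (palI_congr hp (by omega) rfl)
      exact palI_congr this (by omega) rfl
    · intro hp
      have := transfer h' hl.symm j (j - i + 1) (by omega) (by omega) (hl ▸ hj)
        (palI_congr hp (by omega) rfl)
      exact palI_congr this (by omega) rfl
end

section
/- For any string w and any character c, letting w′ = c·w, there is at most one position i with 1 ≤ i ≤ |w| such that ssp_w[i] ≠ ssp_{w′}[i+1]; moreover, if such a position i exists, then ssp_w[i] = ∞ and ssp_{w′}[i+1] = i+1. -/
open scoped ENat

variable {α : Type*}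

lemma sspAt_le (w : List α) (i : ℕ) (u : List α) (hu : u <:+ w.take i)
    (hp : IsPal u) (h2 : 2 ≤ u.length) : sspAt w i ≤ (u.length : ℕ∞) :=
  sInf_le ⟨u, hu, hp, h2, rfl⟩

lemma sspAt_eq_top_iff (w : List α) (i : ℕ) :
    sspAt w i = ⊤ ↔ ∀ u : List α, u <:+ w.take i → IsPal u → ¬ (2 ≤ u.length) := by
  constructor
  · intro h u hu hp h2
    have h1 := sspAt_le w i u hu hp h2
    rw [h, top_le_iff] at h1
    exact ENat.coe_ne_top _ h1
  · intro h
    rw [sspAt, sInf_eq_top]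
    rintro ℓ ⟨u, hu, hp, h2, rfl⟩
    exact absurd h2 (h u hu hp)

lemma key (w : List α) (c : α) (i : ℕ) (hi1 : 1 ≤ i) (hi : i ≤ w.length)
    (h : sspAt w i ≠ sspAt (c :: w) (i + 1)) :
    IsPal (c :: w.take i) ∧ sspAt w i = ⊤ ∧ sspAt (c :: w) (i + 1) = ((i + 1 : ℕ) : ℕ∞) := by
  have htake : (c :: w).take (i + 1) = c :: w.take i := rfl
  have hlen : (w.take i).length = i := by simp [hi]
  -- membership decomposition
  have hmem : ∀ u : List α, u <:+ (c :: w).take (i + 1) → u = c :: w.take i ∨ u <:+ w.take i := by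
    intro u hu
    rw [htake, List.suffix_cons_iff] at hu
    exact hu
  have hP : IsPal (c :: w.take i) := by
    by_contra hnp
    apply h
    rw [sspAt, sspAt]
    congr 1
    ext ℓ
    constructor
    · rintro ⟨u, hu, hp, h2, rfl⟩
      exact ⟨u, by rw [htake]; exact hu.trans (List.suffix_cons c _), hp, h2, rfl⟩
    · rintro ⟨u, hu, hp, h2, rfl⟩
      rcases hmem u hu with rfl | hu'
      · exact absurd hp hnp
      · exact ⟨u, hu', hp, h2, rfl⟩
  have htop : sspAt w i = ⊤ := by
    by_contra hne
    apply h
    -- old set nonempty: get some element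
    simp only [sspAt, ne_eq, sInf_eq_top, not_forall] at hne
    obtain ⟨ℓ₀, ⟨u₀, hu₀, hp₀, h2₀, rfl⟩, -⟩ := hne
    have hle : sspAt w i ≤ (u₀.length : ℕ∞) := sspAt_le w i u₀ hu₀ hp₀ h2₀
    have hlen₀ : u₀.length ≤ i := hlen ▸ hu₀.length_le
    refine le_antisymm ?_ ?_
    · refine le_sInf ?_
      rintro ℓ ⟨u, hu, hp, h2, rfl⟩
      rcases hmem u hu with rfl | hu'
      · refine hle.trans ?_
        exact_mod_cast Nat.le_of_lt_succ (by simp [hlen] at *; omega)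
      · exact sspAt_le w i u hu' hp h2
    · refine sInf_le_sInf ?_
      rintro ℓ ⟨u, hu, hp, h2, rfl⟩
      exact ⟨u, by rw [htake]; exact hu.trans (List.suffix_cons c _), hp, h2, rfl⟩
  refine ⟨hP, htop, ?_⟩
  have hempty := (sspAt_eq_top_iff w i).mp htop
  refine le_antisymm ?_ ?_
  · have := sspAt_le (c :: w) (i + 1) (c :: w.take i)
      (by rw [htake]) hP (by simp [hlen]; omega)
    simpa [hlen] using this
  · refine le_sInf ?_
    rintro ℓ ⟨u, hu, hp, h2, rfl⟩
    rcases hmem u hu with rfl | hu'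
    · simp [hlen]
    · exact absurd h2 (hempty u hu' hp)

lemma no_two (w : List α) (c : α) (i j : ℕ) (hij : i < j) (hi1 : 1 ≤ i) (hj : j ≤ w.length)
    (hPi : IsPal (c :: w.take i)) (hPj : IsPal (c :: w.take j)) (htopj : sspAt w j = ⊤) :
    False := by
  have hi : i ≤ w.length := le_trans hij.le hj
  have hleni : (w.take i).length = i := by simp [hi]
  have hlenj : (w.take j).length = j := by simp [hj]
  have hpre : c :: w.take i <+: c :: w.take j := by
    have heq : w.take i = (w.take j).take i := by rw [List.take_take, min_eq_left hij.le]
    obtain ⟨t, ht⟩ := List.take_prefix i (w.take j)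
    exact ⟨t, by rw [heq]; simp [ht]⟩
  have hsuf : c :: w.take i <:+ c :: w.take j := by
    have h2 := hpre.reverse
    rw [hPi, hPj] at h2
    exact h2
  have hne : c :: w.take i ≠ c :: w.take j := by
    intro hh
    have h3 := congrArg List.length hh
    simp only [List.length_cons, hleni, hlenj] at h3
    omega
  have hsuf' : c :: w.take i <:+ w.take j := by
    rcases List.suffix_cons_iff.mp hsuf with h1 | h1
    · exact absurd h1 hne
    · exact h1
  have hle := sspAt_le w j (c :: w.take i) hsuf' hPi (by simp [hleni]; omega)
  rw [htopj, top_le_iff] at hle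
  exact ENat.coe_ne_top _ hle

/-- Prepending a character changes the ssp-encoding in at most one position, and if a
position `i` changes, then `ssp_w[i] = ∞` and `ssp_{c·w}[i+1] = i+1`. -/
theorem stmt1 {α : Type*} (w : List α) (c : α) :
    (∀ i j, 1 ≤ i → i ≤ w.length → 1 ≤ j → j ≤ w.length →
      sspAt w i ≠ sspAt (c :: w) (i + 1) → sspAt w j ≠ sspAt (c :: w) (j + 1) → i = j) ∧
    (∀ i, 1 ≤ i → i ≤ w.length → sspAt w i ≠ sspAt (c :: w) (i + 1) →
      sspAt w i = ⊤ ∧ sspAt (c :: w) (i + 1) = ((i + 1 : ℕ) : ℕ∞)) := by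
  constructor
  · intro i j hi1 hi hj1 hj hdi hdj
    obtain ⟨hPi, htopi, -⟩ := key w c i hi1 hi hdi
    obtain ⟨hPj, htopj, -⟩ := key w c j hj1 hj hdj
    rcases lt_trichotomy i j with h | h | h
    · exact absurd (no_two w c i j h hi1 hj hPi hPj htopj) (fun x => x)
    · exact h
    · exact absurd (no_two w c j i h hj1 hi hPj hPi htopi) (fun x => x)
  · intro i hi1 hi h
    obtain ⟨-, h1, h2⟩ := key w c i hi1 hi h
    exact ⟨h1, h2⟩
end

section
/- Let x and y be strings of the same length n that pal-match, and let i and j be integers with 1 ≤ i < j ≤ n. If x[i+1..n] and x[j+1..n] are palindromes (where x[n+1..n] denotes the empty string) and x[i] = x[j], then y[i+1..n] and y[j+1..n] are palindromes and y[i] = y[j]. -/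
open scoped ENat

variable {α : Type*}

lemma isPal_short {α : Type*} (l : List α) (h : l.length ≤ 1) : IsPal l := by
  match l with
  | [] => rfl
  | [a] => rfl
  | a :: b :: t => simp at h

lemma sub_suffix {α : Type*} (w : List α) (k : ℕ) : sub w (k + 1) w.length = w.drop k := by
  simp [sub]

lemma key_s2 {α : Type*} (w : List α) (i j : ℕ) (hi : 1 ≤ i) (hij : i < j) (hj : j ≤ w.length)
    (h1 : IsPal (w.drop i)) (h2 : IsPal (w.drop j)) :
    (IsPal (sub w i (w.length + i + 1 - j)) ↔ w[i-1]? = w[j-1]?) := by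
  have hilt : i - 1 < w.length := by omega
  have hjlt : j - 1 < w.length := by omega
  have hsub : sub w i (w.length + i + 1 - j) = w[i-1] :: (w.drop j ++ [w[j-1]]) := by
    unfold sub
    rw [List.drop_take, List.drop_eq_getElem_cons hilt]
    have e1 : i - 1 + 1 = i := by omega
    rw [e1]
    have hK : w.length + i + 1 - j - (i-1) = (w.length - j + 1) + 1 := by omega
    rw [hK, List.take_succ_cons]
    congr 1
    conv_lhs => rw [← h1]
    rw [List.take_reverse]
    have e2 : (w.drop i).length - (w.length - j + 1) = j - 1 - i := by
      simp; omega
    rw [e2, List.drop_drop]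
    have e3 : i + (j - 1 - i) = j - 1 := by omega
    rw [e3, List.drop_eq_getElem_cons hjlt]
    have e4 : j - 1 + 1 = j := by omega
    rw [e4, List.reverse_cons, h2]
  rw [hsub]
  unfold IsPal
  rw [List.reverse_cons, List.reverse_append, List.reverse_singleton, h2]
  rw [List.getElem?_eq_getElem hilt, List.getElem?_eq_getElem hjlt]
  constructor
  · intro heq
    have := (List.cons.injEq _ _ _ _).mp heq
    rw [this.1]
  · intro heq
    have : w[i-1] = w[j-1] := Option.some.inj heq
    rw [this]
    simp

/-- If `x` and `y` pal-match, `1 ≤ i < j ≤ n`, the suffixes `x[i+1..n]` and `x[j+1..n]`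
are palindromes and `x[i] = x[j]`, then the same holds for `y`. -/
theorem stmt2 {α : Type*} (x y : List α) (n : ℕ) (hx : x.length = n)
    (h : PalMatch x y) (i j : ℕ) (hi : 1 ≤ i) (hij : i < j) (hj : j ≤ n)
    (hxi : IsPal (sub x (i + 1) n)) (hxj : IsPal (sub x (j + 1) n))
    (hc : x[i - 1]? = x[j - 1]?) :
    IsPal (sub y (i + 1) n) ∧ IsPal (sub y (j + 1) n) ∧ y[i - 1]? = y[j - 1]? := by
  subst hx
  obtain ⟨hlen, hpm⟩ := h
  rw [sub_suffix] at hxi hxj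
  have hyi : IsPal (sub y (i + 1) x.length) := by
    rcases Nat.lt_or_ge (i + 1) x.length with hlt | hge
    · exact (hpm (i+1) x.length (by omega) hlt le_rfl).mp (by rw [sub_suffix]; exact hxi)
    · rw [hlen, sub_suffix]
      exact isPal_short _ (by simp; omega)
  have hyj : IsPal (sub y (j + 1) x.length) := by
    rcases Nat.lt_or_ge (j + 1) x.length with hlt | hge
    · exact (hpm (j+1) x.length (by omega) hlt le_rfl).mp (by rw [sub_suffix]; exact hxj)
    · rw [hlen, sub_suffix]
      exact isPal_short _ (by simp; omega)
  refine ⟨hyi, hyj, ?_⟩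
  have hxkey := (key_s2 x i j hi hij hj hxi hxj).mpr hc
  have hm1 : i < x.length + i + 1 - j := by omega
  have hm2 : x.length + i + 1 - j ≤ x.length := by omega
  have hykey := (hpm i (x.length + i + 1 - j) hi hm1 hm2).mp hxkey
  have hyi' : IsPal (y.drop i) := by rw [← sub_suffix, ← hlen]; exact hyi
  have hyj' : IsPal (y.drop j) := by rw [← sub_suffix, ← hlen]; exact hyj
  exact (key_s2 y i j hi hij (hlen ▸ hj) hyi' hyj').mp (by rw [← hlen]; exact hykey)
end

section
/- Let x and y be strings of length k such that ssp_x[1..k−1] = ssp_y[1..k−1]. Then ssp_x[k] = ssp_y[k] if and only if sspg_x[k] = sspg_y[k]; and ssp_x[k] < ssp_y[k] if and only if sspg_x[k] < sspg_y[k] (where ∞ is greater than every natural number). -/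
open scoped ENat

variable {α : Type*}

/-- The palindromic proper suffixes of `w` (including the empty suffix). -/
def palSufs (w : List α) : Set (List α) :=
  {u | u <:+ w ∧ IsPal u ∧ u.length < w.length}

/-- The suffix-pal-groups of `w`, identified with the character `w[|w|-|u|]`
immediately to the left of their members. -/
def palSufGroups (w : List α) : Set (Option α) :=
  {c | ∃ u ∈ palSufs w, w[w.length - u.length - 1]? = c}

/-- Length of the representative (shortest member) of the suffix-pal-group of `w`
whose members have the character `c` immediately to their left. -/
noncomputable def repLen (w : List α) (c : Option α) : ℕ :=
  sInf {ℓ : ℕ | ∃ u ∈ palSufs w, w[w.length - u.length - 1]? = c ∧ u.length = ℓ}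

/-- The 1-based identifier of the suffix-pal-group of `w` with left character `c`:
identifiers are assigned in increasing order of the representatives' lengths. -/
noncomputable def groupIdOf (w : List α) (c : Option α) : ℕ :=
  Set.ncard {c' | c' ∈ palSufGroups w ∧ repLen w c' ≤ repLen w c}

/-- `sspgAt w i` : `∞` if `sspAt w i = ∞`, and otherwise the identifier of the
suffix-pal-group of `w[1..i-1]` containing the palindromic suffix of `w[1..i-1]`
of length `sspAt w i - 2`. -/
noncomputable def sspgAt (w : List α) (i : ℕ) : ℕ∞ :=
  if sspAt w i = ⊤ then ⊤
  else (groupIdOf (w.take (i - 1))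
        ((w.take (i - 1))[(i - 1) - ((sspAt w i).toNat - 2) - 1]?) : ℕ∞)

/-- `π(w) = sspg_{reverse w}[|w|]`. -/
noncomputable def piEnc (w : List α) : ℕ∞ := sspgAt w.reverse w.length

/-!
Write `w = w' ++ [a]`. A palindromic suffix of `w` of length `R + 2` is `a u a` with `u` a
palindromic suffix of `w'` preceded by `a`; hence if `ssp_w[|w|]` is finite it equals `R + 2`
for `R` the representative length of the suffix-pal-group of `a`, and `sspg_w[|w|]` is the rank
of `R` in the set `L(w')` of representative lengths. Both are strictly increasing in `R`, so it
suffices that `L(x') = L(y')`. The set `L(w')` only depends on which factors of `w'` are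
palindromes: two palindromic suffixes have the same left letter iff the copy of the shorter one
at the start of the longer one extends to a palindrome. Finally, `ssp_w[1..n]` determines the
palindromic factors of `w[1..n]`, by induction on their end position: a palindromic suffix of
length `ℓ` longer than the shortest one, of length `s`, has palindromes of lengths `ℓ - 2` and `s`
ending one, resp. `ℓ - s`, positions earlier, and these conditions are also sufficient.
-/

theorem sInf_natCast_image_eq_top_iff {S : Set ℕ} :
    sInf (((↑) : ℕ → ℕ∞) '' S) = ⊤ ↔ S = ∅ := by
  simp [sInf_eq_top, Set.eq_empty_iff_forall_notMem]

theorem sInf_natCast_image_eq_coe_iff {S : Set ℕ} {s : ℕ} :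
    sInf (((↑) : ℕ → ℕ∞) '' S) = s ↔ IsLeast S s := by
  refine ⟨fun h => ?_, fun h => (Nat.mono_cast.map_isLeast h).csInf_eq⟩
  have hne : S.Nonempty := Set.nonempty_iff_ne_empty.mpr fun hS => by
    simp [sInf_natCast_image_eq_top_iff.mpr hS] at h
  rw [sInf_image, ← ENat.natCast_sInf hne, Nat.cast_inj] at h
  exact h ▸ isLeast_csInf hne

theorem eq_iff_and_lt_iff_of_strictMonoOn {L : Set ℕ} {f g : ℕ → ℕ} (hf : StrictMonoOn f L)
    (hg : StrictMonoOn g L) {a b c d : ℕ∞}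
    (hac : (a = ⊤ ∧ c = ⊤) ∨ ∃ R ∈ L, a = f R ∧ c = g R)
    (hbd : (b = ⊤ ∧ d = ⊤) ∨ ∃ R ∈ L, b = f R ∧ d = g R) :
    (a = b ↔ c = d) ∧ (a < b ↔ c < d) := by
  rcases hac with ⟨rfl, rfl⟩ | ⟨R, hR, rfl, rfl⟩ <;>
    rcases hbd with ⟨rfl, rfl⟩ | ⟨S, hS, rfl, rfl⟩
  · simp
  · simp
  · simp
  · simp only [Nat.cast_inj, Nat.cast_lt, hf.eq_iff_eq hR hS, hg.eq_iff_eq hR hS,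
      hf.lt_iff_lt hR hS, hg.lt_iff_lt hR hS, and_self]

theorem strictMonoOn_ncard_inter_Iic (L : Set ℕ) :
    StrictMonoOn (fun R => (L ∩ Set.Iic R).ncard) L := by
  intro R₁ _ R₂ h₂ h
  refine Set.ncard_lt_ncard ⟨Set.inter_subset_inter_right L (Set.Iic_subset_Iic.mpr h.le),
    fun hsub => ?_⟩ ((Set.finite_Iic R₂).subset Set.inter_subset_right)
  exact absurd (hsub ⟨h₂, Set.mem_Iic.mpr le_rfl⟩).2 (not_le.mpr h)

/-- `PalEndsAt w i ℓ`: the factor `w[i-ℓ+1..i]` (1-indexed) is a palindrome, stated through the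
0-indexed positions `p, q` of that factor that mirror each other, `p + q = (i - ℓ) + (i - 1)`. -/
def PalEndsAt (w : List α) (i ℓ : ℕ) : Prop :=
  ℓ ≤ i ∧ ∀ p q, i - ℓ ≤ p → i - ℓ ≤ q → p + q + ℓ + 1 = 2 * i → w[p]? = w[q]?

theorem isPal_iff_getElem? {u : List α} :
    IsPal u ↔ ∀ p q, p + q + 1 = u.length → u[p]? = u[q]? := by
  refine ⟨fun h p q hpq => ?_, fun h => List.ext_getElem? fun p => ?_⟩
  · rw [← congrArg (·[p]?) h, List.getElem?_reverse (by omega)]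
    congr 1
    omega
  · rcases lt_or_ge p u.length with hp | hp
    · rw [List.getElem?_reverse hp]
      exact h _ _ (by omega)
    · simp [hp]

theorem exists_isPal_suffix_take_iff {w : List α} {i ℓ : ℕ} (hi : i ≤ w.length) :
    (∃ u, u <:+ w.take i ∧ IsPal u ∧ u.length = ℓ) ↔ PalEndsAt w i ℓ := by
  have hlen : (w.take i).length = i := List.length_take_of_le hi
  have hget : ∀ d p, d + p < i → ((w.take i).drop d)[p]? = w[d + p]? := fun d p h => by
    rw [List.getElem?_drop, List.getElem?_take_of_lt h]
  constructor
  · rintro ⟨u, ⟨v, hv⟩, hpal, rfl⟩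
    have hvl : v.length + u.length = i := by
      simpa only [List.length_append, hlen] using congrArg List.length hv
    have hu : ∀ j, i - u.length ≤ j → j < i → w[j]? = u[j - (i - u.length)]? := fun j hj hji => by
      rw [← List.getElem?_take_of_lt hji, ← hv, List.getElem?_append_right (by omega)]
      congr 1
      omega
    refine ⟨by omega, fun p q hp hq hpq => ?_⟩
    rw [hu p hp (by omega), hu q hq (by omega)]
    exact isPal_iff_getElem?.mp hpal _ _ (by omega)
  · rintro ⟨hle, hpal⟩
    refine ⟨(w.take i).drop (i - ℓ), List.drop_suffix _ _, ?_, by simp [hlen]; omega⟩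
    refine isPal_iff_getElem?.mpr fun p q hpq => ?_
    simp only [List.length_drop, hlen] at hpq
    rw [hget _ _ (by omega), hget _ _ (by omega)]
    exact hpal _ _ (by omega) (by omega) (by omega)

namespace PalEndsAt

variable {w : List α} {i ℓ s : ℕ}

theorem le (h : PalEndsAt w i ℓ) : ℓ ≤ i := h.1

theorem getElem?_eq (h : PalEndsAt w i ℓ) {p q : ℕ} (hp : i - ℓ ≤ p) (hq : i - ℓ ≤ q)
    (hpq : p + q + ℓ + 1 = 2 * i) : w[p]? = w[q]? :=
  h.2 p q hp hq hpq

theorem of_le_one (h1 : ℓ ≤ 1) (hi : ℓ ≤ i) : PalEndsAt w i ℓ :=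
  ⟨hi, fun p q _ _ _ => by rw [show p = q by omega]⟩

theorem congr {v : List α} (h : ∀ p < i, w[p]? = v[p]?) :
    PalEndsAt w i ℓ ↔ PalEndsAt v i ℓ := by
  refine and_congr_right fun hle => forall₄_congr fun p q hp hq => ?_
  refine imp_congr_right fun hpq => ?_
  rw [h p (by omega), h q (by omega)]

theorem add_two_iff (h : ℓ + 2 ≤ i) :
    PalEndsAt w i (ℓ + 2) ↔ w[i - ℓ - 2]? = w[i - 1]? ∧ PalEndsAt w (i - 1) ℓ := by
  refine ⟨fun hw => ⟨hw.getElem?_eq (by omega) (by omega) (by omega),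
    by omega, fun p q hp hq hpq => hw.getElem?_eq (by omega) (by omega) (by omega)⟩, ?_⟩
  rintro ⟨hend, -, hmid⟩
  refine ⟨h, fun p q hp hq hpq => ?_⟩
  rcases Nat.lt_or_ge (i - ℓ - 2) p with hp' | hp'
  · rcases Nat.lt_or_ge (i - ℓ - 2) q with hq' | hq'
    · exact hmid p q (by omega) (by omega) (by omega)
    · rw [show q = i - ℓ - 2 by omega, show p = i - 1 by omega, hend]
  · rw [show p = i - ℓ - 2 by omega, show q = i - 1 by omega, hend]

/-- A palindromic suffix of a palindrome is also its prefix. -/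
theorem mirror (hℓ : PalEndsAt w i ℓ) (hs : PalEndsAt w i s) (hsℓ : s ≤ ℓ) :
    PalEndsAt w (i - ℓ + s) s := by
  have := hℓ.le
  refine ⟨by omega, fun p q hp hq hpq => ?_⟩
  calc w[p]? = w[2 * i - ℓ - 1 - p]? := hℓ.getElem?_eq (by omega) (by omega) (by omega)
    _ = w[2 * i - ℓ - 1 - q]? := hs.getElem?_eq (by omega) (by omega) (by omega)
    _ = w[q]? := hℓ.getElem?_eq (by omega) (by omega) (by omega)

theorem iff_of_isLeast (hs : IsLeast {n | 2 ≤ n ∧ PalEndsAt w i n} s) (hℓ : 2 ≤ ℓ) :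
    PalEndsAt w i ℓ ↔ ℓ ≤ i ∧ PalEndsAt w (i - 1) (ℓ - 2) ∧
      (ℓ = s ∨ s < ℓ ∧ PalEndsAt w (i - ℓ + s) s) := by
  obtain ⟨⟨hs2, hsi⟩, hmin⟩ := hs
  obtain ⟨ℓ, rfl⟩ : ∃ m, ℓ = m + 2 := ⟨ℓ - 2, by omega⟩
  simp only [Nat.add_sub_cancel]
  constructor
  · intro hw
    have hsℓ : s ≤ ℓ + 2 := hmin ⟨hℓ, hw⟩
    refine ⟨hw.le, ((add_two_iff hw.le).mp hw).2, ?_⟩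
    rcases hsℓ.eq_or_lt with rfl | hlt
    · exact Or.inl rfl
    · exact Or.inr ⟨hlt, hw.mirror hsi hsℓ⟩
  · rintro ⟨hle, hmid, rfl | ⟨hlt, hpre⟩⟩
    · exact hsi
    refine (add_two_iff hle).mpr ⟨?_, hmid⟩
    calc w[i - ℓ - 2]? = w[i - ℓ - 2 + s - 1]? := hpre.getElem?_eq (by omega) (by omega) (by omega)
      _ = w[i - s]? := hmid.getElem?_eq (by omega) (by omega) (by omega)
      _ = w[i - 1]? := hsi.getElem?_eq (by omega) (by omega) (by omega)

theorem append_iff {v : List α} (hi : i ≤ w.length) :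
    PalEndsAt (w ++ v) i ℓ ↔ PalEndsAt w i ℓ :=
  congr fun _ hp => List.getElem?_append_left (by omega)

/-- The left letters of two palindromic suffixes agree iff the copy of the shorter one at the
start of the longer one extends to a palindrome. -/
theorem getElem?_eq_iff {R R₀ : ℕ} (hR : PalEndsAt w i R)
    (hR₀ : PalEndsAt w i R₀) (hlt : R₀ < R) (hRi : R < i) :
    w[i - R - 1]? = w[i - R₀ - 1]? ↔ PalEndsAt w (i - R + R₀ + 1) (R₀ + 2) := by
  rw [add_two_iff (by omega), show i - R + R₀ + 1 - R₀ - 2 = i - R - 1 by omega,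
    show i - R + R₀ + 1 - 1 = i - R + R₀ by omega,
    hR.getElem?_eq (p := i - R + R₀) (q := i - R₀ - 1) (by omega) (by omega) (by omega)]
  exact (and_iff_left (hR.mirror hR₀ hlt.le)).symm

end PalEndsAt

theorem sspAt_eq_sInf_s3 {w : List α} {i : ℕ} (hi : i ≤ w.length) :
    sspAt w i = sInf ((↑) '' {n : ℕ | 2 ≤ n ∧ PalEndsAt w i n}) := by
  refine congrArg sInf (Set.ext fun ℓ => ⟨?_, ?_⟩)
  · rintro ⟨u, hu, hpal, h2, rfl⟩
    exact ⟨u.length, ⟨h2, (exists_isPal_suffix_take_iff hi).mp ⟨u, hu, hpal, rfl⟩⟩, rfl⟩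
  · rintro ⟨n, ⟨h2, hn⟩, rfl⟩
    obtain ⟨u, hu, hpal, rfl⟩ := (exists_isPal_suffix_take_iff hi).mpr hn
    exact ⟨u, hu, hpal, h2, rfl⟩

theorem sspAt_eq_top_iff_s3 {w : List α} {i : ℕ} (hi : i ≤ w.length) :
    sspAt w i = ⊤ ↔ {n : ℕ | 2 ≤ n ∧ PalEndsAt w i n} = ∅ := by
  rw [sspAt_eq_sInf_s3 hi, sInf_natCast_image_eq_top_iff]

theorem sspAt_eq_coe_iff {w : List α} {i s : ℕ} (hi : i ≤ w.length) :
    sspAt w i = s ↔ IsLeast {n : ℕ | 2 ≤ n ∧ PalEndsAt w i n} s := by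
  rw [sspAt_eq_sInf_s3 hi, sInf_natCast_image_eq_coe_iff]

theorem sspAt_eq_of_ssp_take_eq {x y : List α} {n : ℕ} (h : (ssp x).take n = (ssp y).take n)
    (hx : n ≤ x.length) (hy : n ≤ y.length) {i : ℕ} (hi : 1 ≤ i) (hin : i ≤ n) :
    sspAt x i = sspAt y i := by
  have := congrArg (·[i - 1]?) h
  simpa [ssp, List.getElem?_take, show i - 1 < n by omega, show i - 1 < x.length by omega,
    show i - 1 < y.length by omega, Nat.sub_add_cancel hi] using this

theorem palEndsAt_iff_of_sspAt_eq {x y : List α} {n : ℕ} (hx : n ≤ x.length)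
    (hy : n ≤ y.length) (h : ∀ i, 1 ≤ i → i ≤ n → sspAt x i = sspAt y i) {i : ℕ}
    (hi : i ≤ n) (ℓ : ℕ) : PalEndsAt x i ℓ ↔ PalEndsAt y i ℓ := by
  induction i using Nat.strong_induction_on generalizing ℓ with
  | _ i IH =>
  by_cases hℓi : ℓ ≤ i
  swap
  · exact iff_of_false (mt PalEndsAt.le hℓi) (mt PalEndsAt.le hℓi)
  rcases le_or_gt ℓ 1 with hℓ1 | hℓ2
  · exact iff_of_true (.of_le_one hℓ1 hℓi) (.of_le_one hℓ1 hℓi)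
  have hxy := h i (by omega) hi
  rcases eq_or_ne (sspAt x i) ⊤ with htop | htop
  · have hxe := (sspAt_eq_top_iff_s3 (by omega)).mp htop
    have hye := (sspAt_eq_top_iff_s3 (by omega)).mp (hxy ▸ htop)
    exact iff_of_false (fun hw => hxe.subset ⟨hℓ2, hw⟩) (fun hw => hye.subset ⟨hℓ2, hw⟩)
  obtain ⟨s, hs⟩ := WithTop.ne_top_iff_exists.mp htop
  rw [PalEndsAt.iff_of_isLeast ((sspAt_eq_coe_iff (by omega)).mp hs.symm) hℓ2,
    PalEndsAt.iff_of_isLeast ((sspAt_eq_coe_iff (by omega)).mp (hxy ▸ hs.symm)) hℓ2]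
  refine and_congr_right fun _ => and_congr (IH (i - 1) (by omega) (by omega) _) ?_
  exact or_congr_right (and_congr_right fun hsℓ => IH (i - ℓ + s) (by omega) (by omega) s)
/-- The lengths of the members of the suffix-pal-group of `w` with left letter `c`. -/
def groupLens (w : List α) (c : Option α) : Set ℕ :=
  {R | R < w.length ∧ PalEndsAt w w.length R ∧ w[w.length - R - 1]? = c}

section Groups

variable {w : List α} {c : Option α}

theorem exists_mem_palSufs_iff {R : ℕ} :
    (∃ u ∈ palSufs w, w[w.length - u.length - 1]? = c ∧ u.length = R) ↔ R ∈ groupLens w c := by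
  have key := exists_isPal_suffix_take_iff (w := w) (ℓ := R) le_rfl
  rw [List.take_length] at key
  constructor
  · rintro ⟨u, ⟨hu, hpal, hlt⟩, hc, rfl⟩
    exact ⟨hlt, key.mp ⟨u, hu, hpal, rfl⟩, hc⟩
  · rintro ⟨hlt, hR, hc⟩
    obtain ⟨u, hu, hpal, rfl⟩ := key.mpr hR
    exact ⟨u, ⟨hu, hpal, hlt⟩, hc, rfl⟩

theorem repLen_eq_sInf_groupLens : repLen w c = sInf (groupLens w c) :=
  congrArg sInf (Set.ext fun _ => exists_mem_palSufs_iff)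

theorem mem_palSufGroups_iff : c ∈ palSufGroups w ↔ (groupLens w c).Nonempty :=
  ⟨fun ⟨u, hu, hc⟩ => ⟨_, exists_mem_palSufs_iff.mp ⟨u, hu, hc, rfl⟩⟩,
    fun ⟨_, hR⟩ => let ⟨u, hu, hc, _⟩ := exists_mem_palSufs_iff.mpr hR; ⟨u, hu, hc⟩⟩

theorem repLen_mem_groupLens (h : c ∈ palSufGroups w) : repLen w c ∈ groupLens w c :=
  repLen_eq_sInf_groupLens ▸ Nat.sInf_mem (mem_palSufGroups_iff.mp h)

theorem repLen_injOn : Set.InjOn (repLen w) (palSufGroups w) := fun _ h₁ _ h₂ heq =>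
  (repLen_mem_groupLens h₁).2.2.symm.trans (heq ▸ (repLen_mem_groupLens h₂).2.2)

theorem groupIdOf_eq_ncard :
    groupIdOf w c = (repLen w '' palSufGroups w ∩ Set.Iic (repLen w c)).ncard := by
  rw [groupIdOf, ← (repLen_injOn.mono fun _ hc => hc.1).ncard_image]
  congr 1
  ext R
  simp only [Set.mem_image, Set.mem_ofPred_eq, Set.mem_inter_iff, Set.mem_Iic]
  grind

end Groups

theorem image_repLen_palSufGroups (w : List α) :
    repLen w '' palSufGroups w = {R | R < w.length ∧ PalEndsAt w w.length R ∧
      ∀ R₀ < R, PalEndsAt w w.length R₀ → ¬ PalEndsAt w (w.length - R + R₀ + 1) (R₀ + 2)} := by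
  ext R
  constructor
  · rintro ⟨c, hc, rfl⟩
    obtain ⟨hlt, hpal, hcR⟩ := repLen_mem_groupLens hc
    refine ⟨hlt, hpal, fun R₀ hR₀ hpal₀ hext => ?_⟩
    have hmem : R₀ ∈ groupLens w c :=
      ⟨by omega, hpal₀, ((hpal.getElem?_eq_iff hpal₀ hR₀ hlt).mpr hext).symm.trans hcR⟩
    exact absurd (repLen_eq_sInf_groupLens ▸ Nat.sInf_le hmem) (not_le.mpr hR₀)
  · rintro ⟨hlt, hpal, hmin⟩
    have hmem : R ∈ groupLens w w[w.length - R - 1]? := ⟨hlt, hpal, rfl⟩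
    have hc := mem_palSufGroups_iff.mpr ⟨R, hmem⟩
    refine ⟨_, hc, le_antisymm (repLen_eq_sInf_groupLens ▸ Nat.sInf_le hmem) ?_⟩
    by_contra! hR₀
    obtain ⟨-, hpal₀, hc₀⟩ := repLen_mem_groupLens hc
    exact hmin _ hR₀ hpal₀ ((hpal.getElem?_eq_iff hpal₀ hR₀ hlt).mp hc₀.symm)

theorem image_repLen_palSufGroups_eq {x y : List α} (hlen : x.length = y.length)
    (h : ∀ i ≤ x.length, ∀ ℓ, PalEndsAt x i ℓ ↔ PalEndsAt y i ℓ) :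
    repLen x '' palSufGroups x = repLen y '' palSufGroups y := by
  rw [image_repLen_palSufGroups, image_repLen_palSufGroups, ← hlen]
  ext R
  refine and_congr_right fun hR => ?_
  rw [h _ le_rfl]
  refine and_congr_right fun _ => forall₂_congr fun R₀ hR₀ => ?_
  rw [h _ le_rfl, h _ (by omega)]

section Concat

variable (w : List α) (a : α)

theorem palEndsAt_concat_iff {R : ℕ} :
    PalEndsAt (w ++ [a]) (w.length + 1) (R + 2) ↔ R ∈ groupLens w (some a) := by
  by_cases hR : R < w.length
  swap
  · exact iff_of_false (fun h => hR (by have := h.le; omega)) (fun h => hR h.1)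
  rw [PalEndsAt.add_two_iff (by omega), Nat.add_sub_cancel, PalEndsAt.append_iff le_rfl,
    show w.length + 1 - R - 2 = w.length - R - 1 by omega,
    List.getElem?_append_left (by omega), List.getElem?_concat_length]
  exact ⟨fun ⟨hc, hpal⟩ => ⟨hR, hpal, hc⟩, fun ⟨_, hpal, hc⟩ => ⟨hc, hpal⟩⟩

theorem setOf_palEndsAt_concat :
    {n | 2 ≤ n ∧ PalEndsAt (w ++ [a]) (w.length + 1) n} = (· + 2) '' groupLens w (some a) := by
  ext n
  constructor
  · rintro ⟨h2, hn⟩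
    obtain ⟨R, rfl⟩ : ∃ R, n = R + 2 := ⟨n - 2, by omega⟩
    exact ⟨R, (palEndsAt_concat_iff w a).mp hn, rfl⟩
  · rintro ⟨R, hR, rfl⟩
    exact ⟨Nat.le_add_left 2 R, (palEndsAt_concat_iff w a).mpr hR⟩

theorem sspAt_concat_of_notMem (h : some a ∉ palSufGroups w) :
    sspAt (w ++ [a]) (w.length + 1) = ⊤ := by
  rw [sspAt_eq_top_iff_s3 (by simp), setOf_palEndsAt_concat, Set.image_eq_empty]
  exact Set.not_nonempty_iff_eq_empty.mp (mt mem_palSufGroups_iff.mpr h)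

theorem sspAt_concat_of_mem (h : some a ∈ palSufGroups w) :
    sspAt (w ++ [a]) (w.length + 1) = ↑(repLen w (some a) + 2) := by
  rw [sspAt_eq_coe_iff (by simp), setOf_palEndsAt_concat]
  refine Monotone.map_isLeast (f := (· + 2)) (fun _ _ h => Nat.add_le_add_right h 2) ?_
  rw [repLen_eq_sInf_groupLens]
  exact isLeast_csInf (mem_palSufGroups_iff.mp h)

theorem sspgAt_concat_of_mem (h : some a ∈ palSufGroups w) :
    sspgAt (w ++ [a]) (w.length + 1) = groupIdOf w (some a) := by
  rw [sspgAt, if_neg (by rw [sspAt_concat_of_mem w a h]; exact ENat.natCast_ne_top _),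
    sspAt_concat_of_mem w a h, ENat.toNat_natCast, Nat.add_sub_cancel, Nat.add_sub_cancel,
    List.take_left' rfl, (repLen_mem_groupLens h).2.2]

theorem sspAt_sspgAt_concat :
    (sspAt (w ++ [a]) (w.length + 1) = ⊤ ∧ sspgAt (w ++ [a]) (w.length + 1) = ⊤) ∨
      ∃ R ∈ repLen w '' palSufGroups w, sspAt (w ++ [a]) (w.length + 1) = ↑(R + 2) ∧
        sspgAt (w ++ [a]) (w.length + 1) = ↑(repLen w '' palSufGroups w ∩ Set.Iic R).ncard := by
  by_cases h : some a ∈ palSufGroups w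
  · exact Or.inr ⟨_, ⟨_, h, rfl⟩, sspAt_concat_of_mem w a h,
      by rw [sspgAt_concat_of_mem w a h, groupIdOf_eq_ncard]⟩
  · have htop := sspAt_concat_of_notMem w a h
    exact Or.inl ⟨htop, by rw [sspgAt, if_pos htop]⟩

end Concat

theorem stmt3_general {α : Type*} (x y : List α) (k : ℕ)
    (hx : x.length = k) (hy : y.length = k)
    (h : (ssp x).take (k - 1) = (ssp y).take (k - 1)) :
    (sspAt x k = sspAt y k ↔ sspgAt x k = sspgAt y k) ∧
    (sspAt x k < sspAt y k ↔ sspgAt x k < sspgAt y k) := by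
  rcases x.eq_nil_or_concat' with rfl | ⟨x, a, rfl⟩
  · obtain rfl : y = [] := List.length_eq_zero_iff.mp (hy.trans hx.symm)
    simp
  obtain ⟨y, b, rfl⟩ := y.eq_nil_or_concat'.resolve_left (by rintro rfl; simp at hx hy; omega)
  simp only [List.length_append, List.length_singleton] at hx hy
  subst hx
  have hlen : x.length = y.length := by omega
  have hpal : ∀ i ≤ x.length, ∀ ℓ, PalEndsAt x i ℓ ↔ PalEndsAt y i ℓ := fun i hi ℓ => by
    rw [← PalEndsAt.append_iff (v := [a]) hi,
      ← PalEndsAt.append_iff (w := y) (v := [b]) (by omega)]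
    exact palEndsAt_iff_of_sspAt_eq (by simp) (by simp; omega)
      (fun j hj hjn => sspAt_eq_of_ssp_take_eq h (by simp) (by simp; omega) hj hjn) hi ℓ
  have hxs := sspAt_sspgAt_concat x a
  have hys := sspAt_sspgAt_concat y b
  rw [image_repLen_palSufGroups_eq hlen hpal] at hxs
  rw [← hlen] at hys
  exact eq_iff_and_lt_iff_of_strictMonoOn (f := (· + 2))
    (fun _ _ _ _ h => Nat.add_lt_add_right h 2) (strictMonoOn_ncard_inter_Iic _) hxs hys

/-- For strings `x, y` of length `k` whose ssp-encodings agree on the first `k-1`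
positions: `ssp_x[k] = ssp_y[k]` iff `sspg_x[k] = sspg_y[k]`, and
`ssp_x[k] < ssp_y[k]` iff `sspg_x[k] < sspg_y[k]`. -/
theorem stmt3 {α : Type*} (x y : List α) (k : ℕ) (hk : 1 ≤ k)
    (hx : x.length = k) (hy : y.length = k)
    (h : (ssp x).take (k - 1) = (ssp y).take (k - 1)) :
    (sspAt x k = sspAt y k ↔ sspgAt x k = sspgAt y k) ∧
    (sspAt x k < sspAt y k ↔ sspgAt x k < sspgAt y k) :=
  stmt3_general x y k hx hy h
end

section
/- Let x and y be nonempty strings with π(x) = π(y). Then ssp_x ≺ ssp_y if and only if ssp_{x[2..|x|]} ≺ ssp_{y[2..|y|]}. -/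
open scoped ENat

variable {α : Type*}

def PalSeg (z : List α) (i j : ℕ) : Prop :=
  ∀ t t', i ≤ t → t < j → t + t' + 1 = i + j → z[t]? = z[t']?

lemma palSeg_shrink {z : List α} {i j : ℕ} (h : PalSeg z i j) (d : ℕ) (hd : d ≤ j) :
    PalSeg z (i + d) (j - d) := by
  intro t t' ht htj hsum
  exact h t t' (by omega) (by omega) (by omega)

lemma isPal_iff_palSeg (u : List α) : IsPal u ↔ PalSeg u 0 u.length := by
  constructor
  · intro hp t t' ht htl hsum
    have h1 : u.reverse[t]? = u[u.length - 1 - t]? := List.getElem?_reverse (by omega)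
    rw [hp] at h1
    rw [h1]; congr 1; omega
  · intro hp
    apply List.ext_getElem?
    intro n
    by_cases hn : n < u.length
    · have h1 : u.reverse[n]? = u[u.length - 1 - n]? := List.getElem?_reverse (by omega)
      rw [h1]
      exact (hp n (u.length - 1 - n) (by omega) hn (by omega)).symm
    · rw [List.getElem?_eq_none (by simpa using (by omega : u.length ≤ n)),
        List.getElem?_eq_none (by omega)]

lemma getElem?_take_drop (z : List α) (i j t : ℕ) (ht : t < j - i) :
    ((z.take j).drop i)[t]? = z[i + t]? := by
  rw [List.getElem?_drop, List.getElem?_take, if_pos (by omega)]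

lemma isPal_take_drop_iff {z : List α} {i j : ℕ} (hij : i ≤ j) (hj : j ≤ z.length) :
    IsPal ((z.take j).drop i) ↔ PalSeg z i j := by
  have hlen : ((z.take j).drop i).length = j - i := by
    simp [List.length_drop, List.length_take]; omega
  rw [isPal_iff_palSeg, hlen]
  constructor
  · intro h t t' ht htj hsum
    have := h (t - i) (t' - i) (by omega) (by omega) (by omega)
    rwa [getElem?_take_drop z i j _ (by omega), getElem?_take_drop z i j _ (by omega),
      (by omega : i + (t - i) = t), (by omega : i + (t' - i) = t')] at this
  · intro h t t' _ htj hsum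
    rw [getElem?_take_drop z i j _ (by omega), getElem?_take_drop z i j _ (by omega)]
    exact h (i + t) (i + t') (by omega) (by omega) (by omega)

def PS (z : List α) (j ℓ : ℕ) : Prop :=
  2 ≤ ℓ ∧ ℓ ≤ j ∧ j ≤ z.length ∧ PalSeg z (j - ℓ) j

lemma PS_iff_exists {z : List α} {j ℓ : ℕ} (hj : j ≤ z.length) (h2 : 2 ≤ ℓ) :
    PS z j ℓ ↔ ∃ u : List α, u <:+ z.take j ∧ IsPal u ∧ u.length = ℓ := by
  constructor
  · rintro ⟨-, hlj, -, hpal⟩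
    refine ⟨(z.take j).drop (j - ℓ), List.drop_suffix _ _, ?_, ?_⟩
    · rw [show (z.take j).drop (j - ℓ) = ((z.take j).take j).drop (j - ℓ) by
        rw [List.take_take]; simp]
      rw [isPal_take_drop_iff (by omega) (by simp [List.length_take]; omega)]
      intro t t' ht htj hsum
      rw [List.getElem?_take, if_pos (by omega), List.getElem?_take, if_pos (by omega)]
      exact hpal t t' ht (by omega) (by omega)
    · rw [List.length_drop, List.length_take]; omega
  · rintro ⟨u, hsuf, hpal, hlen⟩
    have hlj : ℓ ≤ j := by
      have := hsuf.length_le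
      rw [hlen, List.length_take] at this; omega
    refine ⟨h2, hlj, hj, ?_⟩
    have hlen2 : (z.take j).length = j := by rw [List.length_take]; omega
    rw [List.suffix_iff_eq_drop, hlen2, hlen] at hsuf
    rw [hsuf] at hpal
    rwa [isPal_take_drop_iff (by omega) hj] at hpal

lemma sInf_cast_image (T : Set ℕ) (hT : T.Nonempty) :
    sInf ((fun n : ℕ => (n : ℕ∞)) '' T) = ((sInf T : ℕ) : ℕ∞) := by
  apply le_antisymm
  · exact sInf_le ⟨sInf T, Nat.sInf_mem hT, rfl⟩
  · apply le_sInf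
    rintro b ⟨n, hn, rfl⟩
    show ((sInf T : ℕ) : ℕ∞) ≤ (n : ℕ∞)
    exact_mod_cast Nat.sInf_le hn

lemma sspAt_set_eq (z : List α) (j : ℕ) (hj : j ≤ z.length) :
    {ℓ : ℕ∞ | ∃ u : List α, u <:+ z.take j ∧ IsPal u ∧ 2 ≤ u.length ∧ (u.length : ℕ∞) = ℓ}
      = (fun n : ℕ => (n : ℕ∞)) '' {ℓ : ℕ | PS z j ℓ} := by
  ext v
  constructor
  · rintro ⟨u, hsuf, hpal, h2, rfl⟩
    exact ⟨u.length, (PS_iff_exists hj h2).2 ⟨u, hsuf, hpal, rfl⟩, rfl⟩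
  · rintro ⟨ℓ, hPS, rfl⟩
    obtain ⟨u, hsuf, hpal, hlen⟩ := (PS_iff_exists hj hPS.1).1 hPS
    exact ⟨u, hsuf, hpal, by rw [hlen]; exact hPS.1, by rw [hlen]⟩

lemma sspAt_eq_top_iff_s4 {z : List α} {j : ℕ} (hj : j ≤ z.length) :
    sspAt z j = ⊤ ↔ ∀ ℓ, ¬ PS z j ℓ := by
  rw [sspAt, sspAt_set_eq z j hj]
  constructor
  · intro h ℓ hPS
    rw [sInf_eq_top] at h
    exact ENat.coe_ne_top ℓ (h _ ⟨ℓ, hPS, rfl⟩)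
  · intro h
    have : {ℓ : ℕ | PS z j ℓ} = ∅ := Set.eq_empty_iff_forall_notMem.2 h
    rw [this]; simp

lemma sspAt_eq_coe_iff_s4 {z : List α} {j ℓ : ℕ} (hj : j ≤ z.length) :
    sspAt z j = (ℓ : ℕ∞) ↔ PS z j ℓ ∧ ∀ m, m < ℓ → ¬ PS z j m := by
  rw [sspAt, sspAt_set_eq z j hj]
  constructor
  · intro h
    have hne : {m : ℕ | PS z j m}.Nonempty := by
      by_contra hemp
      rw [Set.not_nonempty_iff_eq_empty] at hemp
      rw [hemp] at h
      simp only [Set.image_empty, sInf_empty] at h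
      exact ENat.coe_ne_top ℓ h.symm
    rw [sInf_cast_image _ hne] at h
    have h' : sInf {m : ℕ | PS z j m} = ℓ := by exact_mod_cast h
    refine ⟨h' ▸ Nat.sInf_mem hne, fun m hm hPS => ?_⟩
    have := Nat.sInf_le (s := {m : ℕ | PS z j m}) hPS
    omega
  · rintro ⟨hPS, hmin⟩
    have hne : {m : ℕ | PS z j m}.Nonempty := ⟨ℓ, hPS⟩
    rw [sInf_cast_image _ hne]
    have h1 : sInf {m : ℕ | PS z j m} = ℓ := by
      have h2 := Nat.sInf_le (s := {m : ℕ | PS z j m}) hPS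
      have h3 := Nat.sInf_mem hne
      by_contra hne2
      exact hmin _ (by omega) h3
    rw [h1]

lemma PS.ends {z : List α} {j ℓ : ℕ} (h : PS z j ℓ) : z[j - ℓ]? = z[j - 1]? :=
  h.2.2.2 (j - ℓ) (j - 1) le_rfl (by have := h.1; have := h.2.1; omega)
    (by have := h.1; have := h.2.1; omega)

lemma PS.interior {z : List α} {j ℓ : ℕ} (h : PS z j ℓ) : PalSeg z (j - ℓ + 1) (j - 1) := by
  have h4 := h.1; have h5 := h.2.1
  intro t t' ht htj hsum
  exact h.2.2.2 t t' (by omega) (by omega) (by omega)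

lemma PS.interior_ps {z : List α} {j ℓ : ℕ} (h : PS z j ℓ) (h4 : 4 ≤ ℓ) :
    PS z (j - 1) (ℓ - 2) := by
  have h5 := h.2.1; have h6 := h.2.2.1
  refine ⟨by omega, by omega, by omega, ?_⟩
  have e : j - 1 - (ℓ - 2) = j - ℓ + 1 := by omega
  rw [e]
  exact h.interior

lemma PS.glue {z : List α} {j ℓ : ℕ} (h2 : 2 ≤ ℓ) (hlj : ℓ ≤ j) (hj : j ≤ z.length)
    (hI : PalSeg z (j - ℓ + 1) (j - 1)) (he : z[j - ℓ]? = z[j - 1]?) : PS z j ℓ := by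
  refine ⟨h2, hlj, hj, ?_⟩
  intro t t' ht htj hsum
  by_cases h1 : t = j - ℓ
  · have h1' : t' = j - 1 := by omega
    rw [h1, h1']; exact he
  · by_cases hb : t = j - 1
    · have hb' : t' = j - ℓ := by omega
      rw [hb, hb']; exact he.symm
    · exact hI t t' (by omega) (by omega) (by omega)

lemma samechar_suffix {z : List α} {j ℓ ℓ' : ℕ} (h2 : 2 ≤ ℓ) (hlt : ℓ < ℓ') (hj' : ℓ' ≤ j)
    (hjz : j ≤ z.length)
    (hI : PalSeg z (j - ℓ + 1) (j - 1)) (hI' : PalSeg z (j - ℓ' + 1) (j - 1)) :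
    (z[j - ℓ]? = z[j - ℓ']? ↔ PS z (j - ℓ' + ℓ) ℓ) := by
  constructor
  · intro hc
    refine ⟨h2, by omega, by omega, ?_⟩
    have e : j - ℓ' + ℓ - ℓ = j - ℓ' := by omega
    rw [e]
    intro t t' ht htj hsum
    by_cases h1 : t = j - ℓ'
    · have h1' : t' = j - ℓ' + ℓ - 1 := by omega
      rw [h1, h1']
      exact hc.symm.trans (hI' (j - ℓ) (j - ℓ' + ℓ - 1) (by omega) (by omega) (by omega))
    · by_cases hb : t = j - ℓ' + ℓ - 1
      · have hb' : t' = j - ℓ' := by omega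
        rw [hb, hb']
        exact (hc.symm.trans
          (hI' (j - ℓ) (j - ℓ' + ℓ - 1) (by omega) (by omega) (by omega))).symm
      · have e1 := hI' t (2*j - ℓ' - 1 - t) (by omega) (by omega) (by omega)
        have e2 := hI (2*j - ℓ' - 1 - t) (t + ℓ' - ℓ) (by omega) (by omega) (by omega)
        have e3 := hI' (t + ℓ' - ℓ) t' (by omega) (by omega) (by omega)
        exact e1.trans (e2.trans e3)
  · intro hT
    have hend := hT.ends
    have e1 : j - ℓ' + ℓ - ℓ = j - ℓ' := by omega
    rw [e1] at hend
    have e2 := hI' (j - ℓ' + ℓ - 1) (j - ℓ) (by omega) (by omega) (by omega)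
    exact (hend.trans (by rw [show j - ℓ' + ℓ - 1 = j - ℓ' + ℓ - 1 from rfl]; exact e2)).symm

lemma samechar_prefix {z : List α} {l l' : ℕ} (hlt : l < l') (hl' : l' + 1 ≤ z.length)
    (hu : PalSeg z 0 l) (hu' : PalSeg z 0 l') :
    (z[l]? = z[l']? ↔ PS z (l' + 1) (l + 2)) := by
  have hend : z[l' - l - 1]? = z[l]? :=
    hu' (l' - l - 1) l (by omega) (by omega) (by omega)
  constructor
  · intro hc
    refine ⟨by omega, by omega, by omega, ?_⟩
    have e : l' + 1 - (l + 2) = l' - l - 1 := by omega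
    rw [e]
    intro t t' ht htj hsum
    by_cases h1 : t = l' - l - 1
    · have h1' : t' = l' := by omega
      rw [h1, h1']
      exact hend.trans hc
    · by_cases hb : t = l'
      · have hb' : t' = l' - l - 1 := by omega
        rw [hb, hb']
        exact (hend.trans hc).symm
      · have e1 := hu' t (l' - 1 - t) (by omega) (by omega) (by omega)
        have e2 := hu (l' - 1 - t) (t + l - l') (by omega) (by omega) (by omega)
        have e3 := hu' (t + l - l') t' (by omega) (by omega) (by omega)
        exact e1.trans (e2.trans e3)
  · intro hT
    have hends := hT.ends
    rw [show l' + 1 - (l + 2) = l' - l - 1 from by omega,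
      show l' + 1 - 1 = l' from by omega] at hends
    exact hend.symm.trans hends

lemma trivial_interior {z : List α} {j ℓ : ℕ} (h3 : ℓ ≤ 3) : PalSeg z (j - ℓ + 1) (j - 1) := by
  intro t t' ht htj hsum
  have : t = t' := by omega
  rw [this]

lemma PS_transfer_aux {zx zy : List α} {L : ℕ} (hLx : L ≤ zx.length) (hLy : L ≤ zy.length)
    (hssp : ∀ i, 1 ≤ i → i ≤ L → sspAt zx i = sspAt zy i) :
    ∀ j, j ≤ L → ∀ ℓ, PS zx j ℓ → PS zy j ℓ := by
  intro j
  induction j using Nat.strong_induction_on with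
  | _ j IH =>
    intro hjL ℓ hPS
    have h2ℓ := hPS.1
    have hℓj := hPS.2.1
    have hjx : j ≤ zx.length := by omega
    have hjy : j ≤ zy.length := by omega
    have hne : sspAt zx j ≠ ⊤ := by
      intro hc
      exact (sspAt_eq_top_iff_s4 hjx).1 hc ℓ hPS
    obtain ⟨sn, hsn⟩ := WithTop.ne_top_iff_exists.1 hne
    have hxc := (sspAt_eq_coe_iff_s4 hjx).1 hsn.symm
    have hyc := (sspAt_eq_coe_iff_s4 hjy).1 ((hssp j (by omega) hjL).symm.trans hsn.symm)
    have hsnℓ : sn ≤ ℓ := by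
      by_contra hc
      exact hxc.2 ℓ (by omega) hPS
    have h2sn : 2 ≤ sn := hxc.1.1
    rcases Nat.eq_or_lt_of_le hsnℓ with heq | hlt
    · exact heq ▸ hyc.1
    · -- sn < ℓ
      have hIxs : PalSeg zx (j - sn + 1) (j - 1) := hxc.1.interior
      have hIxl : PalSeg zx (j - ℓ + 1) (j - 1) := hPS.interior
      have hCx : zx[j - sn]? = zx[j - ℓ]? := by
        have e1 := hxc.1.ends
        have e2 := hPS.ends
        exact e1.trans e2.symm
      have hTx : PS zx (j - ℓ + sn) sn :=
        (samechar_suffix h2sn hlt hℓj hjx hIxs hIxl).1 hCx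
      have hTy : PS zy (j - ℓ + sn) sn := IH (j - ℓ + sn) (by omega) (by omega) sn hTx
      have hIyl : PalSeg zy (j - ℓ + 1) (j - 1) := by
        by_cases h4 : 4 ≤ ℓ
        · have := IH (j - 1) (by omega) (by omega) (ℓ - 2) (hPS.interior_ps h4)
          have hps := this.2.2.2
          rwa [show j - 1 - (ℓ - 2) = j - ℓ + 1 from by omega] at hps
        · exact trivial_interior (by omega)
      have hIys : PalSeg zy (j - sn + 1) (j - 1) := hyc.1.interior
      have hCy : zy[j - ℓ]? = zy[j - 1]? := by
        have e1 := (samechar_suffix h2sn hlt hℓj hjy hIys hIyl).2 hTy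
        exact e1.symm.trans hyc.1.ends
      exact PS.glue h2ℓ hℓj hjy hIyl hCy

lemma PS_transfer {zx zy : List α} {L : ℕ} (hLx : L ≤ zx.length) (hLy : L ≤ zy.length)
    (hssp : ∀ i, 1 ≤ i → i ≤ L → sspAt zx i = sspAt zy i) :
    ∀ j, j ≤ L → ∀ ℓ, (PS zx j ℓ ↔ PS zy j ℓ) := fun j hj ℓ =>
  ⟨PS_transfer_aux hLx hLy hssp j hj ℓ,
   PS_transfer_aux hLy hLx (fun i h1 h2 => (hssp i h1 h2).symm) j hj ℓ⟩

lemma palSeg_zero_small {z : List α} {l : ℕ} (hl : l ≤ 1) : PalSeg z 0 l := by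
  intro t t' ht htj hsum
  have : t = t' := by omega
  rw [this]

lemma palSeg_zero_iff_PS {z : List α} {l : ℕ} (h2 : 2 ≤ l) (hz : l ≤ z.length) :
    PalSeg z 0 l ↔ PS z l l := by
  constructor
  · intro h
    refine ⟨h2, le_rfl, hz, ?_⟩
    rwa [Nat.sub_self]
  · intro h
    have := h.2.2.2
    rwa [Nat.sub_self] at this

lemma palSeg_drop_shift {x : List α} {i j : ℕ} :
    PalSeg x (i + 1) (j + 1) ↔ PalSeg (x.drop 1) i j := by
  constructor
  · intro h t t' ht htj hsum
    rw [List.getElem?_drop, List.getElem?_drop]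
    exact h (1 + t) (1 + t') (by omega) (by omega) (by omega)
  · intro h t t' ht htj hsum
    have := h (t - 1) (t' - 1) (by omega) (by omega) (by omega)
    rwa [List.getElem?_drop, List.getElem?_drop,
      (by omega : 1 + (t - 1) = t), (by omega : 1 + (t' - 1) = t')] at this

lemma x_prefix_interior {x : List α} {m : ℕ} (h : PalSeg x 0 (m + 2)) :
    PalSeg (x.drop 1) 0 m := by
  rw [← palSeg_drop_shift]
  have := palSeg_shrink h 1 (by omega)
  simpa using this

lemma x_prefix_glue {x : List α} {m : ℕ} (hz : PalSeg (x.drop 1) 0 m)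
    (he : x[0]? = x[m + 1]?) : PalSeg x 0 (m + 2) := by
  intro t t' ht htj hsum
  by_cases h1 : t = 0
  · have h1' : t' = m + 1 := by omega
    rw [h1, h1']; exact he
  · by_cases hb : t = m + 1
    · have hb' : t' = 0 := by omega
      rw [hb, hb']; exact he.symm
    · have := hz (t - 1) (t' - 1) (by omega) (by omega) (by omega)
      rwa [List.getElem?_drop, List.getElem?_drop,
        (by omega : 1 + (t - 1) = t), (by omega : 1 + (t' - 1) = t')] at this

/-- a palindromic prefix of a palindromic prefix reflects to a palindromic
suffix of `x[1..k+2)`, i.e. of `x.drop 1` up to position `k+1`. -/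

lemma mirror_to_suffix {x : List α} {k m : ℕ} (h2 : 2 ≤ m) (hm : m ≤ k + 1)
    (hk : k + 2 ≤ x.length) (hbig : PalSeg x 0 (k + 2)) (hpre : PalSeg x 0 m) :
    PS (x.drop 1) (k + 1) m := by
  refine ⟨h2, by omega, by simp [List.length_drop]; omega, ?_⟩
  intro t t' ht htj hsum
  rw [List.getElem?_drop, List.getElem?_drop]
  have e1 := hbig (1 + t) (k - t) (by omega) (by omega) (by omega)
  have e2 := hpre (k - t) (m - 1 - (k - t)) (by omega) (by omega) (by omega)
  have e3 := hbig (m - 1 - (k - t)) (1 + t') (by omega) (by omega) (by omega)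
  exact e1.trans (e2.trans e3)

lemma PS_reverse_iff {x : List α} {m : ℕ} (hm : 2 ≤ m) :
    PS x.reverse x.length m ↔ (m ≤ x.length ∧ PalSeg x 0 m) := by
  have hrl : x.length ≤ x.reverse.length := by simp
  rw [PS_iff_exists hrl hm]
  have htk : x.reverse.take x.length = x.reverse := by
    apply List.take_of_length_le; simp
  rw [htk]
  constructor
  · rintro ⟨u, hsuf, hpal, hlen⟩
    have hpre : u <+: x := by
      have := hsuf.reverse
      rwa [List.reverse_reverse, hpal] at this
    have hml : m ≤ x.length := by rw [← hlen]; exact hpre.length_le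
    refine ⟨hml, ?_⟩
    have hu : u = x.take m := by
      rw [List.prefix_iff_eq_take] at hpre
      rw [hpre, hlen]
    rw [hu] at hpal
    have : IsPal ((x.take m).drop 0) := by rwa [List.drop_zero]
    rwa [isPal_take_drop_iff (by omega) hml] at this
  · rintro ⟨hml, hps⟩
    refine ⟨x.take m, ?_, ?_, ?_⟩
    · have : (x.take m).reverse <:+ x.reverse := (List.take_prefix m x).reverse
      have hpal : IsPal (x.take m) := by
        have := (isPal_take_drop_iff (Nat.zero_le m) hml).2 hps
        rwa [List.drop_zero] at this
      rwa [hpal] at this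
    · have := (isPal_take_drop_iff (Nat.zero_le m) hml).2 hps
      rwa [List.drop_zero] at this
    · rw [List.length_take]; omega

def PPS (z : List α) : Set ℕ := {l | l < z.length ∧ PalSeg z 0 l}

def RR (z : List α) : Set ℕ := {l | l ∈ PPS z ∧ ∀ m ∈ PPS z, m < l → z[m]? ≠ z[l]?}

lemma mem_palSufs_reverse {z u : List α} :
    u ∈ palSufs z.reverse ↔ (IsPal u ∧ u.length ∈ PPS z ∧ u = z.take u.length) := by
  constructor
  · rintro ⟨hsuf, hpal, hlen⟩
    have hpre : u <+: z := by
      have := hsuf.reverse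
      rwa [List.reverse_reverse, hpal] at this
    have hu : u = z.take u.length := by
      rw [List.prefix_iff_eq_take] at hpre; exact hpre
    have hlz : u.length < z.length := by simpa using hlen
    refine ⟨hpal, ⟨hlz, ?_⟩, hu⟩
    have : IsPal ((z.take u.length).drop 0) := by rwa [List.drop_zero, ← hu]
    rwa [isPal_take_drop_iff (by omega) (by omega)] at this
  · rintro ⟨hpal, ⟨hlz, hps⟩, hu⟩
    refine ⟨?_, hpal, by simpa using hlz⟩
    have : u.reverse <:+ z.reverse := by
      rw [hu]; exact (List.take_prefix u.length z).reverse
    rwa [hpal] at this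

lemma char_palSufs_reverse {z : List α} {l : ℕ} (hl : l < z.length) :
    z.reverse[z.reverse.length - l - 1]? = z[l]? := by
  have hlen : z.reverse.length = z.length := by simp
  rw [hlen]
  rw [List.getElem?_reverse (by omega)]
  congr 1
  omega

lemma repLen_set_eq {z : List α} (c : Option α) :
    {ℓ : ℕ | ∃ u ∈ palSufs z.reverse, z.reverse[z.reverse.length - u.length - 1]? = c ∧
        u.length = ℓ} = {l | l ∈ PPS z ∧ z[l]? = c} := by
  ext l
  constructor
  · rintro ⟨u, hu, hc, rfl⟩
    obtain ⟨hpal, hmem, -⟩ := mem_palSufs_reverse.1 hu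
    exact ⟨hmem, by rw [← char_palSufs_reverse hmem.1]; exact hc⟩
  · rintro ⟨hmem, hc⟩
    have hlz : l < z.length := hmem.1
    have hlen : (z.take l).length = l := by rw [List.length_take]; omega
    refine ⟨z.take l, ?_, ?_, hlen⟩
    · apply mem_palSufs_reverse.2
      refine ⟨?_, by rw [hlen]; exact hmem, by rw [hlen]⟩
      have := (isPal_take_drop_iff (Nat.zero_le l) (le_of_lt hlz)).2 hmem.2
      rwa [List.drop_zero] at this
    · rw [hlen, char_palSufs_reverse hlz]
      exact hc

lemma palSufGroups_reverse {z : List α} :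
    palSufGroups z.reverse = (fun l => z[l]?) '' PPS z := by
  ext c
  constructor
  · rintro ⟨u, hu, hc⟩
    obtain ⟨hpal, hmem, -⟩ := mem_palSufs_reverse.1 hu
    exact ⟨u.length, hmem, by show z[u.length]? = c; rw [← char_palSufs_reverse hmem.1]; exact hc⟩
  · rintro ⟨l, hl, rfl⟩
    have : l ∈ {m | m ∈ PPS z ∧ z[m]? = z[l]?} := ⟨hl, rfl⟩
    rw [← repLen_set_eq (z[l]?)] at this
    obtain ⟨u, hu, hc, -⟩ := this
    exact ⟨u, hu, hc⟩

lemma repLen_mem_RR {z : List α} {c : Option α} (hc : c ∈ palSufGroups z.reverse) :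
    repLen z.reverse c ∈ RR z ∧ z[repLen z.reverse c]? = c := by
  have hne : {l | l ∈ PPS z ∧ z[l]? = c}.Nonempty := by
    rw [palSufGroups_reverse] at hc
    obtain ⟨l, hl, rfl⟩ := hc
    exact ⟨l, hl, rfl⟩
  have hrep : repLen z.reverse c = sInf {l | l ∈ PPS z ∧ z[l]? = c} := by
    rw [repLen, repLen_set_eq]
  have hmem : repLen z.reverse c ∈ {l | l ∈ PPS z ∧ z[l]? = c} := by
    rw [hrep]
    exact Nat.sInf_mem hne
  refine ⟨⟨hmem.1, fun m hm hlt hcm => ?_⟩, hmem.2⟩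
  have : m ∈ {l | l ∈ PPS z ∧ z[l]? = c} := ⟨hm, hcm.trans hmem.2⟩
  have hle : repLen z.reverse c ≤ m := by
    rw [repLen, repLen_set_eq]
    exact Nat.sInf_le this
  omega

lemma repLen_of_RR {z : List α} {l : ℕ} (hl : l ∈ RR z) : repLen z.reverse (z[l]?) = l := by
  have hmc : z[l]? ∈ palSufGroups z.reverse := by
    rw [palSufGroups_reverse]; exact ⟨l, hl.1, rfl⟩
  obtain ⟨hrr, hchar⟩ := repLen_mem_RR hmc
  have hle : repLen z.reverse (z[l]?) ≤ l := by
    rw [repLen, repLen_set_eq]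
    exact Nat.sInf_le ⟨hl.1, rfl⟩
  rcases Nat.eq_or_lt_of_le hle with h | h
  · exact h
  · exact absurd hchar (hl.2 _ hrr.1 h)

lemma groupIdOf_eq_ncard_s4 {z : List α} {c : Option α} (hc : c ∈ palSufGroups z.reverse) :
    groupIdOf z.reverse c = (RR z ∩ Set.Iic (repLen z.reverse c)).ncard := by
  rw [groupIdOf]
  rw [show (RR z ∩ Set.Iic (repLen z.reverse c))
      = (repLen z.reverse) '' {c' | c' ∈ palSufGroups z.reverse ∧
          repLen z.reverse c' ≤ repLen z.reverse c} from ?_]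
  · rw [Set.ncard_image_of_injOn]
    rintro c1 ⟨hc1, -⟩ c2 ⟨hc2, -⟩ he
    have h1 := (repLen_mem_RR hc1).2
    have h2 := (repLen_mem_RR hc2).2
    rw [← h1, ← h2, he]
  · ext l
    constructor
    · rintro ⟨hlRR, hle⟩
      exact ⟨z[l]?, ⟨by rw [palSufGroups_reverse]; exact ⟨l, hlRR.1, rfl⟩,
        by rw [repLen_of_RR hlRR]; exact hle⟩, repLen_of_RR hlRR⟩
    · rintro ⟨c', ⟨hc', hle⟩, rfl⟩
      exact ⟨(repLen_mem_RR hc').1, hle⟩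

lemma piEnc_eq_top {x : List α} (h : sspAt x.reverse x.length = ⊤) : piEnc x = ⊤ := by
  rw [piEnc, sspgAt, if_pos h]

lemma piEnc_ne_top {x : List α} (h : sspAt x.reverse x.length ≠ ⊤) : piEnc x ≠ ⊤ := by
  rw [piEnc, sspgAt, if_neg h]
  exact ENat.coe_ne_top _

lemma reverse_take_drop (x : List α) : x.reverse.take (x.length - 1) = (x.drop 1).reverse := by
  have h1 : (x.reverse.take (x.length - 1)).reverse = x.drop 1 := by
    rcases x with - | ⟨a, t⟩
    · simp
    · rw [List.reverse_take]
      simp only [List.reverse_reverse, List.length_reverse]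
      congr 1
      simp only [List.length_cons]
      omega
  rw [← h1, List.reverse_reverse]

lemma piEnc_formula {x : List α} {qn : ℕ} (hq : sspAt x.reverse x.length = (qn : ℕ∞)) :
    piEnc x = ((RR (x.drop 1) ∩ Set.Iic (qn - 2)).ncard : ℕ∞) ∧
      (qn - 2) ∈ RR (x.drop 1) ∧ 2 ≤ qn ∧ qn ≤ x.length ∧ PalSeg x 0 qn := by
  have hrl : x.length ≤ x.reverse.length := by simp
  have hps := (sspAt_eq_coe_iff_s4 hrl).1 hq
  have h2q : 2 ≤ qn := hps.1.1
  have hqn : qn ≤ x.length := by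
    have := hps.1.2.1
    simpa using this
  have hpal : PalSeg x 0 qn := ((PS_reverse_iff h2q).1 hps.1).2
  set z := x.drop 1 with hz
  have hzl : z.length = x.length - 1 := by simp [hz]
  have hn2 : 2 ≤ x.length := by omega
  have hqpp : qn - 2 ∈ PPS z := by
    refine ⟨by omega, ?_⟩
    have hpal' : PalSeg x 0 (qn - 2 + 2) := by
      rwa [show qn - 2 + 2 = qn from by omega]
    exact x_prefix_interior hpal'
  have hqRR : qn - 2 ∈ RR z := by
    refine ⟨hqpp, fun m hm hlt heq => ?_⟩
    have he0 : x[0]? = x[qn - 1]? := hpal 0 (qn - 1) (le_rfl) (by omega) (by omega)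
    have hc1 : z[qn - 2]? = x[qn - 1]? := by
      rw [hz, List.getElem?_drop]
      congr 1
      omega
    have hc2 : z[m]? = x[m + 1]? := by
      rw [hz, List.getElem?_drop]
      congr 1
      omega
    have hx0 : x[0]? = x[m + 1]? := by
      rw [he0, ← hc1, ← heq, hc2]
    have hm2 : PalSeg x 0 (m + 2) := x_prefix_glue hm.2 hx0
    have : PS x.reverse x.length (m + 2) := by
      rw [PS_reverse_iff (by omega)]
      exact ⟨by omega, hm2⟩
    exact hps.2 (m + 2) (by omega) this
  refine ⟨?_, hqRR, h2q, hqn, hpal⟩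
  rw [piEnc, sspgAt, if_neg (by rw [hq]; exact ENat.coe_ne_top qn)]
  rw [show x.reverse.take (x.length - 1) = z.reverse from reverse_take_drop x]
  rw [hq]
  have htn : ((qn : ℕ∞)).toNat = qn := by simp
  rw [htn]
  have hzrl : x.length - 1 = z.reverse.length := by simp [hzl]
  rw [hzrl]
  have hchar : z.reverse[z.reverse.length - (qn - 2) - 1]? = z[qn - 2]? :=
    char_palSufs_reverse (by omega)
  rw [hchar]
  rw [groupIdOf_eq_ncard_s4 (by rw [palSufGroups_reverse]; exact ⟨qn - 2, hqpp, rfl⟩)]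
  rw [repLen_of_RR hqRR]

lemma RR_transfer_aux {zx zy : List α} {L : ℕ} (hLx : L + 1 ≤ zx.length)
    (hLy : L + 1 ≤ zy.length)
    (hssp : ∀ i, 1 ≤ i → i ≤ L + 1 → sspAt zx i = sspAt zy i) :
    ∀ l ≤ L, l ∈ RR zx → l ∈ RR zy := by
  have hPP : ∀ l, l ≤ L → (PalSeg zx 0 l ↔ PalSeg zy 0 l) := by
    intro l hl
    by_cases h1 : l ≤ 1
    · exact ⟨fun _ => palSeg_zero_small h1, fun _ => palSeg_zero_small h1⟩
    · rw [palSeg_zero_iff_PS (by omega) (by omega), palSeg_zero_iff_PS (by omega) (by omega)]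
      exact PS_transfer hLx hLy hssp l (by omega) l
  intro l hl hRx
  have hpsy : PalSeg zy 0 l := (hPP l hl).1 hRx.1.2
  refine ⟨⟨by omega, hpsy⟩, fun m hm hlt heq => ?_⟩
  have hpsxm : PalSeg zx 0 m := (hPP m (by omega)).2 hm.2
  have hcx : zx[m]? = zx[l]? := by
    rw [samechar_prefix hlt (by omega) hpsxm hRx.1.2]
    rw [samechar_prefix hlt (by omega) hm.2 hpsy] at heq
    exact (PS_transfer hLx hLy hssp (l + 1) (by omega) (m + 2)).2 heq
  exact hRx.2 m ⟨by omega, hpsxm⟩ hlt hcx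

lemma crux_aux {x y : List α} {k : ℕ} (hkx : k + 2 ≤ x.length) (hky : k + 2 ≤ y.length)
    (hssp : ∀ i, 1 ≤ i → i ≤ k + 1 → sspAt (x.drop 1) i = sspAt (y.drop 1) i)
    (htx : sspAt (x.drop 1) (k + 1) = ⊤)
    (hpi : piEnc x = piEnc y) (hbx : PalSeg x 0 (k + 2)) : PalSeg y 0 (k + 2) := by
  have hzxl : (x.drop 1).length = x.length - 1 := by simp
  have hzyl : (y.drop 1).length = y.length - 1 := by simp
  -- step 1 : sspAt x.reverse x.length = k+2
  have hqx : sspAt x.reverse x.length = ((k + 2 : ℕ) : ℕ∞) := by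
    rw [sspAt_eq_coe_iff_s4 (by simp)]
    constructor
    · rw [PS_reverse_iff (by omega)]
      exact ⟨hkx, hbx⟩
    · intro m hmlt hPSm
      have h2m : 2 ≤ m := hPSm.1
      have hpre : PalSeg x 0 m := ((PS_reverse_iff h2m).1 hPSm).2
      have := mirror_to_suffix h2m (by omega) hkx hbx hpre
      exact (sspAt_eq_top_iff_s4 (by omega)).1 htx m this
  obtain ⟨hfx, hkRRx, -, -, -⟩ :=
    piEnc_formula (x := x) hqx
  rw [show k + 2 - 2 = k from by omega] at hfx hkRRx
  -- step 3 : y's shortest palindromic prefix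
  have hqy_ne : sspAt y.reverse y.length ≠ ⊤ := by
    intro hc
    rw [hfx, piEnc_eq_top hc] at hpi
    exact ENat.coe_ne_top _ hpi
  obtain ⟨m, hm⟩ := WithTop.ne_top_iff_exists.1 hqy_ne
  obtain ⟨hfy, hmRRy, h2m, hmy, hpaly⟩ := piEnc_formula (x := y) hm.symm
  -- step 4 : RR transfer up to k
  have hRR : ∀ l, l ≤ k → (l ∈ RR (x.drop 1) ↔ l ∈ RR (y.drop 1)) := by
    intro l hl
    exact ⟨RR_transfer_aux (by omega) (by omega) hssp l hl,
      RR_transfer_aux (by omega) (by omega) (fun i h1 h2 => (hssp i h1 h2).symm) l hl⟩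
  -- case split on m
  rcases lt_trichotomy m (k + 2) with hlt | heq | hgt
  · -- m < k+2 : contradiction
    exfalso
    have hsub : RR (y.drop 1) ∩ Set.Iic (m - 2) = RR (x.drop 1) ∩ Set.Iic (m - 2) := by
      ext l
      simp only [Set.mem_inter_iff, Set.mem_Iic]
      constructor
      · rintro ⟨h1, h2⟩; exact ⟨(hRR l (by omega)).2 h1, h2⟩
      · rintro ⟨h1, h2⟩; exact ⟨(hRR l (by omega)).1 h1, h2⟩
    have hss : RR (x.drop 1) ∩ Set.Iic (m - 2) ⊂ RR (x.drop 1) ∩ Set.Iic k := by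
      constructor
      · exact Set.inter_subset_inter_right _ (Set.Iic_subset_Iic.2 (by omega))
      · intro hcon
        have := hcon ⟨hkRRx, Set.mem_Iic.2 le_rfl⟩
        simp only [Set.mem_inter_iff, Set.mem_Iic] at this
        omega
    have hcard := Set.ncard_lt_ncard hss
      ((Set.finite_Iic k).inter_of_right _)
    rw [hfx, hfy, hsub] at hpi
    have : (RR (x.drop 1) ∩ Set.Iic k).ncard = (RR (x.drop 1) ∩ Set.Iic (m - 2)).ncard := by
      exact_mod_cast hpi
    omega
  · -- m = k+2 : done
    rw [heq] at hpaly
    exact hpaly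
  · -- m > k+2 : contradiction
    exfalso
    have hsub : RR (y.drop 1) ∩ Set.Iic k = RR (x.drop 1) ∩ Set.Iic k := by
      ext l
      simp only [Set.mem_inter_iff, Set.mem_Iic]
      constructor
      · rintro ⟨h1, h2⟩; exact ⟨(hRR l h2).2 h1, h2⟩
      · rintro ⟨h1, h2⟩; exact ⟨(hRR l h2).1 h1, h2⟩
    have hss : RR (y.drop 1) ∩ Set.Iic k ⊂ RR (y.drop 1) ∩ Set.Iic (m - 2) := by
      constructor
      · exact Set.inter_subset_inter_right _ (Set.Iic_subset_Iic.2 (by omega))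
      · intro hcon
        have := hcon ⟨hmRRy, Set.mem_Iic.2 le_rfl⟩
        simp only [Set.mem_inter_iff, Set.mem_Iic] at this
        omega
    have hcard := Set.ncard_lt_ncard hss
      ((Set.finite_Iic (m - 2)).inter_of_right _)
    rw [hfx, hfy] at hpi
    have : (RR (x.drop 1) ∩ Set.Iic k).ncard = (RR (y.drop 1) ∩ Set.Iic (m - 2)).ncard := by
      exact_mod_cast hpi
    rw [← hsub] at this
    omega

lemma crux {x y : List α} {k : ℕ} (hkx : k + 2 ≤ x.length) (hky : k + 2 ≤ y.length)
    (hssp : ∀ i, 1 ≤ i → i ≤ k + 1 → sspAt (x.drop 1) i = sspAt (y.drop 1) i)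
    (htx : sspAt (x.drop 1) (k + 1) = ⊤) (hty : sspAt (y.drop 1) (k + 1) = ⊤)
    (hpi : piEnc x = piEnc y) :
    (PalSeg x 0 (k + 2) ↔ PalSeg y 0 (k + 2)) :=
  ⟨crux_aux hkx hky hssp htx hpi,
   crux_aux hky hkx (fun i h1 h2 => (hssp i h1 h2).symm) hty hpi.symm⟩

lemma sspAt_le_one {w : List α} {i : ℕ} (h : i ≤ 1) : sspAt w i = ⊤ := by
  rw [sspAt, sInf_eq_top]
  rintro a ⟨u, hsuf, -, h2, rfl⟩
  have := hsuf.length_le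
  rw [List.length_take] at this
  omega

lemma PS_drop_iff {x : List α} {k ℓ : ℕ} (hk : k + 2 ≤ x.length) (hℓ : ℓ ≤ k + 1) :
    PS (x.drop 1) (k + 1) ℓ ↔ PS x (k + 2) ℓ := by
  have hzl : (x.drop 1).length = x.length - 1 := by simp
  constructor
  · rintro ⟨h2, -, -, hps⟩
    refine ⟨h2, by omega, by omega, ?_⟩
    have := (palSeg_drop_shift (i := k + 1 - ℓ) (j := k + 1)).2 hps
    rwa [show k + 1 - ℓ + 1 = k + 2 - ℓ from by omega, show k + 1 + 1 = k + 2 from rfl] at this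
  · rintro ⟨h2, -, -, hps⟩
    refine ⟨h2, by omega, by omega, ?_⟩
    have h1 : PalSeg x (k + 1 - ℓ + 1) (k + 1 + 1) := by
      rwa [show k + 1 - ℓ + 1 = k + 2 - ℓ from by omega]
    exact palSeg_drop_shift.1 h1

lemma sspAt_step_coe {x : List α} {k v : ℕ} (hk : k + 2 ≤ x.length)
    (h : sspAt (x.drop 1) (k + 1) = (v : ℕ∞)) : sspAt x (k + 2) = (v : ℕ∞) ∧ v ≤ k + 1 := by
  have hzl : (x.drop 1).length = x.length - 1 := by simp
  have hc := (sspAt_eq_coe_iff_s4 (by omega)).1 h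
  have hvb : v ≤ k + 1 := hc.1.2.1
  refine ⟨(sspAt_eq_coe_iff_s4 (by omega)).2 ⟨(PS_drop_iff hk hvb).1 hc.1, fun m hm hPS => ?_⟩, hvb⟩
  exact hc.2 m hm ((PS_drop_iff hk (by omega)).2 hPS)

lemma sspAt_step_top_pal {x : List α} {k : ℕ} (hk : k + 2 ≤ x.length)
    (h : sspAt (x.drop 1) (k + 1) = ⊤) (hpal : PalSeg x 0 (k + 2)) :
    sspAt x (k + 2) = ((k + 2 : ℕ) : ℕ∞) := by
  have hzl : (x.drop 1).length = x.length - 1 := by simp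
  have htop := (sspAt_eq_top_iff_s4 (z := x.drop 1) (j := k + 1) (by omega)).1 h
  refine (sspAt_eq_coe_iff_s4 (by omega)).2 ⟨?_, fun m hm hPS => ?_⟩
  · exact (palSeg_zero_iff_PS (by omega) hk).1 hpal
  · have hmb : m ≤ k + 1 := by have := hPS.2.1; omega
    exact htop m ((PS_drop_iff hk hmb).2 hPS)

lemma sspAt_step_top_npal {x : List α} {k : ℕ} (hk : k + 2 ≤ x.length)
    (h : sspAt (x.drop 1) (k + 1) = ⊤) (hpal : ¬ PalSeg x 0 (k + 2)) :
    sspAt x (k + 2) = ⊤ := by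
  have hzl : (x.drop 1).length = x.length - 1 := by simp
  have htop := (sspAt_eq_top_iff_s4 (z := x.drop 1) (j := k + 1) (by omega)).1 h
  rw [sspAt_eq_top_iff_s4 (by omega)]
  intro ℓ hPS
  rcases Nat.lt_or_ge ℓ (k + 2) with hlt | hge
  · exact htop ℓ ((PS_drop_iff hk (by omega)).2 hPS)
  · have : ℓ = k + 2 := by have := hPS.2.1; omega
    rw [this] at hPS
    exact hpal ((palSeg_zero_iff_PS (by omega) hk).2 hPS)

lemma sspAt_ne_top_bound {x : List α} {k : ℕ} (hk : k + 2 ≤ x.length)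
    (h : sspAt x (k + 2) ≠ ⊤) : ∃ v : ℕ, sspAt x (k + 2) = (v : ℕ∞) ∧ v ≤ k + 2 := by
  obtain ⟨v, hv⟩ := WithTop.ne_top_iff_exists.1 h
  have hb := ((sspAt_eq_coe_iff_s4 (z := x) (j := k + 2) (by omega)).1 hv.symm).1.2.1
  exact ⟨v, hv.symm, by omega⟩

lemma sspAt_back_transfer {x y : List α} {k : ℕ} (hkx : k + 2 ≤ x.length)
    (hky : k + 2 ≤ y.length) (h : sspAt x (k + 2) = sspAt y (k + 2)) :
    sspAt (x.drop 1) (k + 1) = sspAt (y.drop 1) (k + 1) := by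
  by_cases hx : sspAt (x.drop 1) (k + 1) = ⊤
  · by_cases hy : sspAt (y.drop 1) (k + 1) = ⊤
    · rw [hx, hy]
    · exfalso
      obtain ⟨v, hv⟩ := WithTop.ne_top_iff_exists.1 hy
      obtain ⟨hyv, hvb⟩ := sspAt_step_coe hky hv.symm
      by_cases hpal : PalSeg x 0 (k + 2)
      · have := sspAt_step_top_pal hkx hx hpal
        rw [this, hyv] at h
        have : k + 2 = v := by exact_mod_cast h
        omega
      · have := sspAt_step_top_npal hkx hx hpal
        rw [this, hyv] at h
        exact ENat.coe_ne_top v h.symm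
  · obtain ⟨v, hv⟩ := WithTop.ne_top_iff_exists.1 hx
    obtain ⟨hxv, hvb⟩ := sspAt_step_coe hkx hv.symm
    by_cases hy : sspAt (y.drop 1) (k + 1) = ⊤
    · exfalso
      by_cases hpal : PalSeg y 0 (k + 2)
      · have := sspAt_step_top_pal hky hy hpal
        rw [this, hxv] at h
        have : v = k + 2 := by exact_mod_cast h
        omega
      · have := sspAt_step_top_npal hky hy hpal
        rw [this, hxv] at h
        exact ENat.coe_ne_top v h
    · obtain ⟨w', hw⟩ := WithTop.ne_top_iff_exists.1 hy
      obtain ⟨hyv, hwb⟩ := sspAt_step_coe hky hw.symm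
      rw [← hv, ← hw]
      rw [hxv, hyv] at h
      exact h

lemma lex_iff_exists {β : Type*} (r : β → β → Prop) :
    ∀ (s t : List β), List.Lex r s t ↔
      ∃ i : ℕ, (∀ j, j < i → ∃ c, s[j]? = some c ∧ t[j]? = some c) ∧
        ((s.length = i ∧ i < t.length) ∨
          ∃ a b, s[i]? = some a ∧ t[i]? = some b ∧ r a b) := by
  intro s
  induction s with
  | nil =>
    intro t
    cases t with
    | nil =>
      constructor
      · intro h; cases h
      · rintro ⟨i, -, ⟨h1, h2⟩ | ⟨a, b, ha, hb, -⟩⟩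
        · simp at h2
        · simp at hb
    | cons b t' =>
      constructor
      · intro _
        exact ⟨0, by omega, Or.inl ⟨rfl, by simp⟩⟩
      · intro _
        exact List.Lex.nil
  | cons a s' IH =>
    intro t
    cases t with
    | nil =>
      constructor
      · intro h; cases h
      · rintro ⟨i, -, ⟨h1, h2⟩ | ⟨a', b', ha, hb, -⟩⟩
        · simp at h2
        · simp at hb
    | cons b t' =>
      constructor
      · intro h
        cases h with
        | rel hr =>
          exact ⟨0, by omega, Or.inr ⟨a, b, by simp, by simp, hr⟩⟩
        | cons h' =>
          obtain ⟨i, hpref, hcase⟩ := (IH t').1 h'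
          refine ⟨i + 1, ?_, ?_⟩
          · intro j hj
            cases j with
            | zero => exact ⟨a, by simp, by simp⟩
            | succ j' =>
              obtain ⟨c, hc1, hc2⟩ := hpref j' (by omega)
              exact ⟨c, by simpa using hc1, by simpa using hc2⟩
          · rcases hcase with ⟨h1, h2⟩ | ⟨a', b', ha, hb, hr⟩
            · exact Or.inl ⟨by simp [h1], by simp; omega⟩
            · exact Or.inr ⟨a', b', by simpa using ha, by simpa using hb, hr⟩
      · rintro ⟨i, hpref, hcase⟩
        cases i with
        | zero =>
          rcases hcase with ⟨h1, h2⟩ | ⟨a', b', ha, hb, hr⟩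
          · simp at h1
          · simp at ha hb
            rw [← ha, ← hb] at hr
            exact List.Lex.rel hr
        | succ i' =>
          obtain ⟨c, hc1, hc2⟩ := hpref 0 (by omega)
          simp at hc1 hc2
          have hab : a = b := hc1.trans hc2.symm
          subst hab
          apply List.Lex.cons
          apply (IH t').2
          refine ⟨i', ?_, ?_⟩
          · intro j hj
            obtain ⟨c', hc1', hc2'⟩ := hpref (j + 1) (by omega)
            exact ⟨c', by simpa using hc1', by simpa using hc2'⟩
          · rcases hcase with ⟨h1, h2⟩ | ⟨a', b', ha, hb, hr⟩
            · refine Or.inl ⟨by simp at h1; omega, by simp at h2; omega⟩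
            · exact Or.inr ⟨a', b', by simpa using ha, by simpa using hb, hr⟩

lemma sspAt_fwd_transfer {x y : List α} {k : ℕ} (hkx : k + 2 ≤ x.length)
    (hky : k + 2 ≤ y.length)
    (hpref : ∀ i, 1 ≤ i → i ≤ k + 1 → sspAt (x.drop 1) i = sspAt (y.drop 1) i)
    (hpi : piEnc x = piEnc y) : sspAt x (k + 2) = sspAt y (k + 2) := by
  by_cases hxt : sspAt (x.drop 1) (k + 1) = ⊤
  · have hyt : sspAt (y.drop 1) (k + 1) = ⊤ :=
      (hpref (k + 1) (by omega) le_rfl).symm.trans hxt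
    have hcx := crux hkx hky hpref hxt hyt hpi
    by_cases hpal : PalSeg x 0 (k + 2)
    · rw [sspAt_step_top_pal hkx hxt hpal, sspAt_step_top_pal hky hyt (hcx.1 hpal)]
    · rw [sspAt_step_top_npal hkx hxt hpal,
        sspAt_step_top_npal hky hyt (fun hp => hpal (hcx.2 hp))]
  · obtain ⟨v, hv⟩ := WithTop.ne_top_iff_exists.1 hxt
    have hyv : sspAt (y.drop 1) (k + 1) = (v : ℕ∞) :=
      (hpref (k + 1) (by omega) le_rfl).symm.trans hv.symm
    rw [(sspAt_step_coe hkx hv.symm).1, (sspAt_step_coe hky hyv).1]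

lemma ssp_length (w : List α) : (ssp w).length = w.length := by simp [ssp]

lemma ssp_getElem?_lt {w : List α} {j : ℕ} (h : j < w.length) :
    (ssp w)[j]? = some (sspAt w (j + 1)) := by
  rw [ssp, List.getElem?_map]
  rw [List.getElem?_range h]
  rfl

lemma ssp_getElem?_some {w : List α} {j : ℕ} {c : ℕ∞} (h : (ssp w)[j]? = some c) :
    j < w.length ∧ c = sspAt w (j + 1) := by
  have hj : j < w.length := by
    by_contra hc
    rw [List.getElem?_eq_none (by rw [ssp_length]; omega)] at h
    simp at h
  rw [ssp_getElem?_lt hj] at h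
  exact ⟨hj, by injection h.symm⟩

/-- For nonempty strings `x, y` with `π(x) = π(y)`:
`ssp x ≺ ssp y` iff `ssp x[2..] ≺ ssp y[2..]`. -/
theorem stmt4 {α : Type*} (x y : List α) (hx : x ≠ []) (hy : y ≠ [])
    (h : piEnc x = piEnc y) :
    List.Lex (· < ·) (ssp x) (ssp y) ↔
      List.Lex (· < ·) (ssp (x.drop 1)) (ssp (y.drop 1)) := by
  have hnx : 1 ≤ x.length := List.length_pos_iff.2 hx
  have hny : 1 ≤ y.length := List.length_pos_iff.2 hy
  have hzx : (x.drop 1).length = x.length - 1 := by simp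
  have hzy : (y.drop 1).length = y.length - 1 := by simp
  rw [lex_iff_exists, lex_iff_exists]
  constructor
  · rintro ⟨i, hpref, hcase⟩
    have hprefval : ∀ j, j < i →
        j < x.length ∧ j < y.length ∧ sspAt x (j + 1) = sspAt y (j + 1) := by
      intro j hj
      obtain ⟨c, hc1, hc2⟩ := hpref j hj
      obtain ⟨hj1, hv1⟩ := ssp_getElem?_some hc1
      obtain ⟨hj2, hv2⟩ := ssp_getElem?_some hc2
      exact ⟨hj1, hj2, by rw [← hv1, ← hv2]⟩
    have hdropval : ∀ j, j + 1 < i →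
        sspAt (x.drop 1) (j + 1) = sspAt (y.drop 1) (j + 1) := by
      intro j hj
      obtain ⟨h1, h2, h3⟩ := hprefval (j + 1) hj
      exact sspAt_back_transfer (by omega) (by omega) h3
    rcases hcase with ⟨h1, h2⟩ | ⟨A, B, hA, hB, hAB⟩
    · rw [ssp_length] at h1 h2
      refine ⟨i - 1, ?_, Or.inl ⟨by rw [ssp_length]; omega, by rw [ssp_length]; omega⟩⟩
      intro j hj
      refine ⟨sspAt (x.drop 1) (j + 1), ssp_getElem?_lt (by omega), ?_⟩
      rw [ssp_getElem?_lt (by omega)]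
      exact congrArg some (hdropval j (by omega)).symm
    · obtain ⟨hiA, hvA⟩ := ssp_getElem?_some hA
      obtain ⟨hiB, hvB⟩ := ssp_getElem?_some hB
      subst hvA hvB
      have hi1 : 1 ≤ i := by
        by_contra h0
        have hi0 : i = 0 := by omega
        rw [hi0, sspAt_le_one le_rfl, sspAt_le_one le_rfl] at hAB
        exact lt_irrefl _ hAB
      obtain ⟨k, rfl⟩ : ∃ k, i = k + 1 := ⟨i - 1, by omega⟩
      have hAB' : sspAt x (k + 2) < sspAt y (k + 2) := hAB
      by_cases hat : sspAt (x.drop 1) (k + 1) = ⊤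
      · by_cases hbt : sspAt (y.drop 1) (k + 1) = ⊤
        · exfalso
          have hssp : ∀ ii, 1 ≤ ii → ii ≤ k + 1 →
              sspAt (x.drop 1) ii = sspAt (y.drop 1) ii := by
            intro ii hii1 hii2
            rcases eq_or_lt_of_le hii2 with he | hlt2
            · rw [he, hat, hbt]
            · have := hdropval (ii - 1) (by omega)
              rwa [show ii - 1 + 1 = ii from by omega] at this
          have hcx := crux (k := k) (by omega) (by omega) hssp hat hbt h
          by_cases hpal : PalSeg x 0 (k + 2)
          · rw [sspAt_step_top_pal (by omega) hat hpal,
              sspAt_step_top_pal (by omega) hbt (hcx.1 hpal)] at hAB'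
            exact lt_irrefl _ hAB'
          · rw [sspAt_step_top_npal (by omega) hat hpal] at hAB'
            exact not_top_lt hAB'
        · exfalso
          obtain ⟨w', hw⟩ := WithTop.ne_top_iff_exists.1 hbt
          obtain ⟨hyv, hwb⟩ := sspAt_step_coe (by omega) hw.symm
          rw [hyv] at hAB'
          by_cases hpal : PalSeg x 0 (k + 2)
          · rw [sspAt_step_top_pal (by omega) hat hpal] at hAB'
            have : (k + 2 : ℕ) < w' := by exact_mod_cast hAB'
            omega
          · rw [sspAt_step_top_npal (by omega) hat hpal] at hAB'
            exact not_top_lt hAB'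
      · obtain ⟨v, hv⟩ := WithTop.ne_top_iff_exists.1 hat
        obtain ⟨hxv, hvbnd⟩ := sspAt_step_coe (by omega) hv.symm
        have habval : sspAt (x.drop 1) (k + 1) < sspAt (y.drop 1) (k + 1) := by
          by_cases hbt : sspAt (y.drop 1) (k + 1) = ⊤
          · rw [hbt, ← hv]
            exact WithTop.coe_lt_top v
          · obtain ⟨w', hw⟩ := WithTop.ne_top_iff_exists.1 hbt
            obtain ⟨hyv, hwb⟩ := sspAt_step_coe (by omega) hw.symm
            rw [hxv, hyv] at hAB'
            rw [← hv, ← hw]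
            exact hAB'
        refine ⟨k, ?_, Or.inr ⟨sspAt (x.drop 1) (k + 1), sspAt (y.drop 1) (k + 1),
          ssp_getElem?_lt (by omega), ssp_getElem?_lt (by omega), habval⟩⟩
        intro j hj
        refine ⟨sspAt (x.drop 1) (j + 1), ssp_getElem?_lt (by omega), ?_⟩
        rw [ssp_getElem?_lt (by omega)]
        exact congrArg some (hdropval j (by omega)).symm
  · rintro ⟨i, hpref, hcase⟩
    have hprefval : ∀ j, j < i → j < x.length - 1 ∧ j < y.length - 1 ∧
        sspAt (x.drop 1) (j + 1) = sspAt (y.drop 1) (j + 1) := by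
      intro j hj
      obtain ⟨c, hc1, hc2⟩ := hpref j hj
      obtain ⟨hj1, hv1⟩ := ssp_getElem?_some hc1
      obtain ⟨hj2, hv2⟩ := ssp_getElem?_some hc2
      rw [hzx] at hj1
      rw [hzy] at hj2
      exact ⟨hj1, hj2, by rw [← hv1, ← hv2]⟩
    have hfwd : ∀ j, j < i → j + 2 ≤ x.length → j + 2 ≤ y.length →
        sspAt x (j + 2) = sspAt y (j + 2) := by
      intro j hj hjx hjy
      apply sspAt_fwd_transfer hjx hjy ?_ h
      intro ii hii1 hii2
      have := (hprefval (ii - 1) (by omega)).2.2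
      rwa [show ii - 1 + 1 = ii from by omega] at this
    rcases hcase with ⟨h1, h2⟩ | ⟨a, b, ha, hb, hab⟩
    · rw [ssp_length, hzx] at h1
      rw [ssp_length, hzy] at h2
      refine ⟨i + 1, ?_, Or.inl ⟨by rw [ssp_length]; omega, by rw [ssp_length]; omega⟩⟩
      intro j hj
      cases j with
      | zero =>
        refine ⟨⊤, ?_, ?_⟩
        · rw [ssp_getElem?_lt (by omega), sspAt_le_one le_rfl]
        · rw [ssp_getElem?_lt (by omega), sspAt_le_one le_rfl]
      | succ j' =>
        refine ⟨sspAt x (j' + 2), ?_, ?_⟩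
        · rw [ssp_getElem?_lt (by omega)]
        · rw [ssp_getElem?_lt (by omega)]
          exact congrArg some (hfwd j' (by omega) (by omega) (by omega)).symm
    · obtain ⟨hia, hva⟩ := ssp_getElem?_some ha
      obtain ⟨hib, hvb⟩ := ssp_getElem?_some hb
      rw [hzx] at hia
      rw [hzy] at hib
      subst hva hvb
      have hanetop : sspAt (x.drop 1) (i + 1) ≠ ⊤ := ne_top_of_lt hab
      obtain ⟨v, hv⟩ := WithTop.ne_top_iff_exists.1 hanetop
      obtain ⟨hxv, hvbnd⟩ := sspAt_step_coe (by omega) hv.symm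
      have hfinal : sspAt x (i + 2) < sspAt y (i + 2) := by
        rw [hxv]
        by_cases hbt : sspAt (y.drop 1) (i + 1) = ⊤
        · by_cases hpal : PalSeg y 0 (i + 2)
          · rw [sspAt_step_top_pal (by omega) hbt hpal]
            exact_mod_cast Nat.lt_succ_of_le hvbnd
          · rw [sspAt_step_top_npal (by omega) hbt hpal]
            exact WithTop.coe_lt_top v
        · obtain ⟨w', hw⟩ := WithTop.ne_top_iff_exists.1 hbt
          obtain ⟨hyv, hwb⟩ := sspAt_step_coe (by omega) hw.symm
          rw [hyv]
          rw [← hv, ← hw] at hab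
          exact hab
      refine ⟨i + 1, ?_, Or.inr ⟨sspAt x (i + 2), sspAt y (i + 2), ?_, ?_, hfinal⟩⟩
      · intro j hj
        cases j with
        | zero =>
          refine ⟨⊤, ?_, ?_⟩
          · rw [ssp_getElem?_lt (by omega), sspAt_le_one le_rfl]
          · rw [ssp_getElem?_lt (by omega), sspAt_le_one le_rfl]
        | succ j' =>
          refine ⟨sspAt x (j' + 2), ?_, ?_⟩
          · rw [ssp_getElem?_lt (by omega)]
          · rw [ssp_getElem?_lt (by omega)]
            exact congrArg some (hfwd j' (by omega) (by omega) (by omega)).symm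
      · rw [ssp_getElem?_lt (by omega)]
      · rw [ssp_getElem?_lt (by omega)]
end

section
/- For any nonempty string w over a finite alphabet Σ of size σ, the number of suffix-pal-groups of w is at most σ, and also at most 2⌈log₂(|w|+1)⌉ + 2. -/
open scoped ENat

variable {α : Type*}

/-- A period of a list, stated with optional indexing. -/
private def Per (v : List α) (r : ℕ) : Prop := ∀ i, i + r < v.length → v[i]? = v[i + r]?

private lemma per_border {u v : List α} (hp : u <+: v) (hs : u <:+ v) :
    Per v (v.length - u.length) := by
  intro i hi
  have hul : u.length ≤ v.length := hp.length_le
  have hiu : i < u.length := by omega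
  obtain ⟨s, hv⟩ := hs
  have hsl : s.length = v.length - u.length := by
    have := congrArg List.length hv
    simp [List.length_append] at this
    omega
  have h1 : v[i]? = u[i]? := by
    rw [List.getElem?_eq_getElem (by omega : i < v.length),
      List.getElem?_eq_getElem hiu, hp.getElem hiu]
  have h2 : v[i + (v.length - u.length)]? = u[i]? := by
    rw [show i + (v.length - u.length) = s.length + i by omega, ← hv,
      List.getElem?_append_right (Nat.le_add_right _ _)]
    simp
  rw [h1, h2]

private lemma per_chain {v : List α} {g : ℕ} (h : Per v g) :
    ∀ k i, i + k * g < v.length → v[i]? = v[i + k * g]? := by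
  intro k
  induction k with
  | zero => simp
  | succ k ih =>
    intro i hi
    have hk : (k + 1) * g = k * g + g := by ring
    have h1 : v[i]? = v[i + g]? := h i (by omega)
    have h2 : v[i + g]? = v[i + g + k * g]? := ih (i + g) (by omega)
    rw [h1, h2, show i + g + k * g = i + (k + 1) * g by omega]

private lemma fw_aux (v : List α) :
    ∀ N p q, p + q ≤ N → p ≤ q → Per v p → Per v q → p + q ≤ v.length →
      Per v (Nat.gcd p q) := by
  intro N
  induction N with
  | zero =>
    intro p q hN hpq hp hq _
    have : p = 0 ∧ q = 0 := by omega
    obtain ⟨rfl, rfl⟩ := this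
    simpa using hp
  | succ N ih =>
    intro p q hN hpq hp hq hlen
    rcases Nat.eq_zero_or_pos p with rfl | hppos
    · simpa [Nat.gcd_zero_left] using hq
    · have hper : Per v (q - p) := by
        intro i hi
        by_cases hc : i + q < v.length
        · have h1 : v[i]? = v[i + q]? := hq i hc
          have h2 : v[i + (q - p)]? = v[i + (q - p) + p]? := hp (i + (q - p)) (by omega)
          rw [show i + (q - p) + p = i + q by omega] at h2
          rw [h1, ← h2]
        · have hip : p ≤ i := by omega
          have h1 : v[i - p]? = v[i - p + p]? := hp (i - p) (by omega)
          rw [show i - p + p = i by omega] at h1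
          have h2 : v[i - p]? = v[i - p + q]? := hq (i - p) (by omega)
          rw [show i - p + q = i + (q - p) by omega] at h2
          rw [← h1, h2]
      rcases le_or_gt p (q - p) with h1 | h1
      · have := ih p (q - p) (by omega) h1 hp hper (by omega)
        rwa [Nat.gcd_sub_self_right hpq] at this
      · have := ih (q - p) p (by omega) (le_of_lt h1) hper hp (by omega)
        rwa [Nat.gcd_sub_self_left hpq, Nat.gcd_comm q p] at this

private lemma suf_getElem {u w : List α} (h : u <:+ w) {i : ℕ} (hi : i < u.length) :
    w[w.length - u.length + i]? = u[i]? := by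
  obtain ⟨s, hv⟩ := h
  have hsl : s.length = w.length - u.length := by
    have := congrArg List.length hv
    simp [List.length_append] at this
    omega
  rw [show w.length - u.length + i = s.length + i by omega, ← hv,
    List.getElem?_append_right (Nat.le_add_right _ _)]
  simp

/-- Core lemma: among three palindromic suffixes with the largest at most twice
the smallest, the two smaller ones have the same left character. -/
private lemma leftchar_eq {w u₁ u₂ u₃ : List α}
    (h1 : u₁ <:+ w) (h2 : u₂ <:+ w) (h3 : u₃ <:+ w)
    (p1 : IsPal u₁) (p2 : IsPal u₂) (p3 : IsPal u₃)
    (hab : u₁.length < u₂.length) (hbc : u₂.length < u₃.length)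
    (hca : u₃.length ≤ 2 * u₁.length) :
    w[w.length - u₁.length - 1]? = w[w.length - u₂.length - 1]? := by
  set a := u₁.length with ha
  set b := u₂.length with hb
  set c := u₃.length with hc
  have hcn : c ≤ w.length := h3.length_le
  have h13 : u₁ <:+ u₃ := List.suffix_of_suffix_length_le h1 h3 (by omega)
  have h23 : u₂ <:+ u₃ := List.suffix_of_suffix_length_le h2 h3 (by omega)
  have hp13 : u₁ <+: u₃ := by
    have h := h13
    rw [← p1, ← p3] at h
    exact List.reverse_suffix.mp h
  have hp23 : u₂ <+: u₃ := by
    have h := h23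
    rw [← p2, ← p3] at h
    exact List.reverse_suffix.mp h
  have hq : Per u₃ (c - a) := per_border hp13 h13
  have hp : Per u₃ (c - b) := per_border hp23 h23
  set g := Nat.gcd (c - b) (c - a) with hg
  have hfw : Per u₃ g :=
    fw_aux u₃ ((c - b) + (c - a)) (c - b) (c - a) le_rfl (by omega) hp hq (by omega)
  have hgb : g ∣ (c - b) := Nat.gcd_dvd_left _ _
  have hga : g ∣ (c - a) := Nat.gcd_dvd_right _ _
  have hgba : g ∣ (b - a) := by
    have := Nat.dvd_sub hga hgb
    rwa [show (c - a) - (c - b) = b - a by omega] at this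
  have hgpos : 0 < g := Nat.gcd_pos_of_pos_left _ (by omega)
  have e1 : w[w.length - a - 1]? = u₃[c - a - 1]? := by
    rw [show w.length - a - 1 = w.length - c + (c - a - 1) by omega]
    exact suf_getElem h3 (by omega)
  have e2 : w[w.length - b - 1]? = u₃[c - b - 1]? := by
    rw [show w.length - b - 1 = w.length - c + (c - b - 1) by omega]
    exact suf_getElem h3 (by omega)
  have echain : u₃[c - b - 1]? = u₃[c - b - 1 + ((b - a) / g) * g]? :=
    per_chain hfw ((b - a) / g) (c - b - 1)
      (by rw [Nat.div_mul_cancel hgba]; omega)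
  rw [Nat.div_mul_cancel hgba, show c - b - 1 + (b - a) = c - a - 1 by omega] at echain
  rw [e1, e2, echain]

/-- If two numbers are in the same dyadic `clog` bucket, the bigger is at most
twice the smaller. -/
private lemma clog_bucket {m M : ℕ} (hmM : m < M)
    (h : Nat.clog 2 (m + 1) = Nat.clog 2 (M + 1)) : M ≤ 2 * m := by
  rcases Nat.eq_zero_or_pos m with rfl | hm
  · exfalso
    have h2 : 0 < Nat.clog 2 (M + 1) := Nat.clog_pos one_lt_two (by omega)
    simp [Nat.clog_one_right] at h
    omega
  · set k := Nat.clog 2 (m + 1) with hk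
    have hkpos : 0 < k := Nat.clog_pos one_lt_two (by omega)
    have hlow : 2 ^ (k - 1) < m + 1 := by
      have := Nat.pow_pred_clog_lt_self one_lt_two (x := m + 1) (by omega)
      simpa [Nat.pred_eq_sub_one, ← hk] using this
    have hhigh : M + 1 ≤ 2 ^ k := by
      have := Nat.le_pow_clog one_lt_two (M + 1)
      rwa [← h] at this
    have h2k : 2 ^ k = 2 * 2 ^ (k - 1) := by
      rw [← pow_succ']
      congr 1
      omega
    omega

/-- Counting: a set of naturals below `n` in which no three elements `a<b<c`
satisfy `c ≤ 2a` has at most `2 clog₂(n+1) + 2` elements. -/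
private lemma count_bound {T : Finset ℕ} {n : ℕ} (hub : ∀ x ∈ T, x < n)
    (htriple : ∀ a b c, a ∈ T → b ∈ T → c ∈ T → a < b → b < c → c ≤ 2 * a → False) :
    T.card ≤ 2 * Nat.clog 2 (n + 1) + 2 := by
  classical
  set f : ℕ → ℕ := fun ℓ => Nat.clog 2 (ℓ + 1) with hf
  have hfib : ∀ k ∈ T.image f, (T.filter fun x => f x = k).card ≤ 2 := by
    intro k _
    set F := T.filter fun x => f x = k with hF
    by_contra hcard
    push_neg at hcard
    have hne : F.Nonempty := Finset.card_pos.mp (by omega)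
    set m := F.min' hne with hm
    set M := F.max' hne with hM
    have hsub : F ⊆ {m, M} := by
      intro x hx
      by_contra hx'
      simp only [Finset.mem_insert, Finset.mem_singleton] at hx'
      push_neg at hx'
      have hmx : m < x := lt_of_le_of_ne (Finset.min'_le F x hx) (Ne.symm hx'.1)
      have hxM : x < M := lt_of_le_of_ne (Finset.le_max' F x hx) hx'.2
      have hmF := Finset.min'_mem F hne
      have hMF := Finset.max'_mem F hne
      have hfm : f m = k := (Finset.mem_filter.mp hmF).2
      have hfM : f M = k := (Finset.mem_filter.mp hMF).2
      have hMm : M ≤ 2 * m := clog_bucket (by omega) (hfm.trans hfM.symm)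
      exact htriple m x M (Finset.mem_filter.mp hmF).1 (Finset.mem_filter.mp hx).1
        (Finset.mem_filter.mp hMF).1 hmx hxM hMm
    have : F.card ≤ 2 := by
      calc F.card ≤ ({m, M} : Finset ℕ).card := Finset.card_le_card hsub
        _ ≤ 2 := Finset.card_insert_le m {M} |>.trans (by simp)
    omega
  have h1 : T.card ≤ 2 * (T.image f).card := Finset.card_le_mul_card_image T 2 hfib
  have h2 : (T.image f).card ≤ Nat.clog 2 (n + 1) + 1 := by
    have hsub : T.image f ⊆ Finset.range (Nat.clog 2 (n + 1) + 1) := by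
      intro k hk
      obtain ⟨x, hx, rfl⟩ := Finset.mem_image.mp hk
      have := hub x hx
      have : f x ≤ Nat.clog 2 (n + 1) := Nat.clog_mono_right 2 (by omega)
      rw [Finset.mem_range]
      omega
    calc (T.image f).card ≤ (Finset.range (Nat.clog 2 (n + 1) + 1)).card :=
        Finset.card_le_card hsub
      _ = Nat.clog 2 (n + 1) + 1 := Finset.card_range _
  omega

/-- For any nonempty string over a finite alphabet of size `σ`, the number of
suffix-pal-groups is at most `σ`, and at most `2⌈log₂(|w|+1)⌉ + 2`. -/
theorem stmt5 {α : Type*} [Fintype α] (w : List α) (hw : w ≠ []) :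
    (palSufGroups w).ncard ≤ Fintype.card α ∧
    (palSufGroups w).ncard ≤ 2 * Nat.clog 2 (w.length + 1) + 2 := by
  classical
  have hn : 0 < w.length := List.length_pos_iff.mpr hw
  constructor
  · -- alphabet bound
    have hsub : palSufGroups w ⊆ Set.range (some : α → Option α) := by
      rintro c ⟨u, hu, rfl⟩
      have hlt : w.length - u.length - 1 < w.length := by omega
      exact ⟨w[w.length - u.length - 1], (List.getElem?_eq_getElem hlt).symm⟩
    calc (palSufGroups w).ncard ≤ (Set.range (some : α → Option α)).ncard :=
        Set.ncard_le_ncard hsub (Set.toFinite _)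
      _ = Fintype.card α := by
        rw [← Set.image_univ, Set.ncard_image_of_injective _ (Option.some_injective α),
          Set.ncard_univ, Nat.card_eq_fintype_card]
  · -- logarithmic bound
    have hGfin : (palSufGroups w).Finite := Set.toFinite _
    -- representative facts
    have hrep : ∀ c ∈ palSufGroups w, ∃ u ∈ palSufs w,
        w[w.length - u.length - 1]? = c ∧ u.length = repLen w c := by
      intro c hc
      obtain ⟨u, hu, huc⟩ := hc
      have hne : {ℓ : ℕ | ∃ u ∈ palSufs w,
          w[w.length - u.length - 1]? = c ∧ u.length = ℓ}.Nonempty :=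
        ⟨u.length, u, hu, huc, rfl⟩
      exact Nat.sInf_mem hne
    -- the finset of representative lengths
    set T : Finset ℕ := hGfin.toFinset.image (repLen w) with hT
    have hinj : Set.InjOn (repLen w) hGfin.toFinset := by
      intro c1 hc1 c2 hc2 heq
      simp only [Finset.mem_coe, Set.Finite.mem_toFinset] at hc1 hc2
      obtain ⟨u1, hu1, hch1, hl1⟩ := hrep c1 hc1
      obtain ⟨u2, hu2, hch2, hl2⟩ := hrep c2 hc2
      rw [← hch1, ← hch2, hl1, hl2, heq]
    have hcardT : T.card = hGfin.toFinset.card := Finset.card_image_of_injOn hinj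
    have hub : ∀ x ∈ T, x < w.length := by
      intro x hx
      obtain ⟨c, hc, rfl⟩ := Finset.mem_image.mp hx
      rw [Set.Finite.mem_toFinset] at hc
      obtain ⟨u, hu, _, hl⟩ := hrep c hc
      rw [← hl]
      exact hu.2.2
    have htriple : ∀ a b c, a ∈ T → b ∈ T → c ∈ T → a < b → b < c → c ≤ 2 * a → False := by
      intro a b c haT hbT hcT hab hbc hca
      obtain ⟨c1, hc1, ha⟩ := Finset.mem_image.mp haT
      obtain ⟨c2, hc2, hb⟩ := Finset.mem_image.mp hbT
      obtain ⟨c3, hc3, hcc⟩ := Finset.mem_image.mp hcT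
      rw [Set.Finite.mem_toFinset] at hc1 hc2 hc3
      obtain ⟨u1, hu1, hch1, hl1⟩ := hrep c1 hc1
      obtain ⟨u2, hu2, hch2, hl2⟩ := hrep c2 hc2
      obtain ⟨u3, hu3, hch3, hl3⟩ := hrep c3 hc3
      have hl1' : u1.length = a := by rw [hl1, ha]
      have hl2' : u2.length = b := by rw [hl2, hb]
      have hl3' : u3.length = c := by rw [hl3, hcc]
      have heq := leftchar_eq hu1.1 hu2.1 hu3.1 hu1.2.1 hu2.2.1 hu3.2.1
        (by omega) (by omega) (by omega)
      rw [hl1', hl2'] at heq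
      have hc12 : c1 = c2 := by
        rw [← hch1, ← hch2, hl1', hl2', heq]
      have : a = b := by rw [← ha, ← hb, hc12]
      omega
    have hbound := count_bound hub htriple
    rw [Set.ncard_eq_toFinset_card (palSufGroups w) hGfin, ← hcardT]
    exact hbound
end

section
/- For any two strings x and y over the same alphabet, x and y pal-match if and only if lpal_x = lpal_y (in particular, equality of the lpal-encodings forces |x| = |y|). -/
open scoped ENat

variable {α : Type*}

/-- `lpalAt w i` : length of the longest palindromic suffix of `w[1..i]`. -/
noncomputable def lpalAt (w : List α) (i : ℕ) : ℕ :=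
  sSup {ℓ : ℕ | ∃ u : List α, u <:+ w.take i ∧ IsPal u ∧ u.length = ℓ}

/-- The lpal-encoding of `w`. -/
noncomputable def lpal (w : List α) : List ℕ :=
  (List.range w.length).map fun k => lpalAt w (k + 1)

namespace Aux

lemma isPal_reverse {w : List α} : IsPal w.reverse ↔ IsPal w := by
  simp [IsPal, eq_comm]

lemma suffix_eq_drop {u v : List α} (h : u <:+ v) : u = v.drop (v.length - u.length) := by
  obtain ⟨t, rfl⟩ := h
  rw [List.length_append, Nat.add_sub_cancel, List.drop_left]

lemma bddAbove_S (w : List α) (i : ℕ) :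
    BddAbove {ℓ : ℕ | ∃ u : List α, u <:+ w.take i ∧ IsPal u ∧ u.length = ℓ} := by
  refine ⟨(w.take i).length, ?_⟩
  rintro ℓ ⟨u, hu, -, rfl⟩
  exact hu.length_le

lemma nonempty_S (w : List α) (i : ℕ) :
    Set.Nonempty {ℓ : ℕ | ∃ u : List α, u <:+ w.take i ∧ IsPal u ∧ u.length = ℓ} :=
  ⟨0, [], List.nil_suffix, rfl, rfl⟩

lemma lpalAt_mem (w : List α) (i : ℕ) :
    ∃ u : List α, u <:+ w.take i ∧ IsPal u ∧ u.length = lpalAt w i :=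
  Nat.sSup_mem (nonempty_S w i) (bddAbove_S w i)

lemma le_lpalAt {w u : List α} {i : ℕ} (h : u <:+ w.take i) (hp : IsPal u) :
    u.length ≤ lpalAt w i :=
  le_csSup (bddAbove_S w i) ⟨u, h, hp, rfl⟩

lemma lpalAt_le (w : List α) (i : ℕ) : lpalAt w i ≤ i := by
  apply csSup_le (nonempty_S w i)
  rintro ℓ ⟨u, hu, -, rfl⟩
  calc u.length ≤ (w.take i).length := hu.length_le
    _ ≤ i := by simp

lemma lpalAt_pos {w : List α} {i : ℕ} (h1 : 1 ≤ i) (h2 : i ≤ w.length) :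
    1 ≤ lpalAt w i := by
  have hne : w.take i ≠ [] := by
    intro h
    have h' := congrArg List.length h
    rw [List.length_take, List.length_nil] at h'
    omega
  have := le_lpalAt (u := [(w.take i).getLast hne])
    ⟨(w.take i).dropLast, List.dropLast_append_getLast hne⟩ (by simp [IsPal])
  simpa using this

/-- suffix of length `ℓ` of `w[1..j]` -/
def sfx (w : List α) (j ℓ : ℕ) : List α := (w.take j).drop (j - ℓ)

lemma sfx_suffix (w : List α) (j ℓ : ℕ) : sfx w j ℓ <:+ w.take j := List.drop_suffix _ _

lemma sfx_length {w : List α} {j ℓ : ℕ} (hj : j ≤ w.length) (hℓ : ℓ ≤ j) :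
    (sfx w j ℓ).length = ℓ := by
  simp [sfx]; omega

lemma suffix_eq_sfx {w u : List α} {j : ℕ} (hj : j ≤ w.length) (h : u <:+ w.take j) :
    u = sfx w j u.length := by
  have hlen : (w.take j).length = j := by
    rw [List.length_take]; omega
  calc u = (w.take j).drop ((w.take j).length - u.length) := suffix_eq_drop h
    _ = sfx w j u.length := by rw [hlen]; rfl

lemma pal_take_iff_drop {p : List α} (hp : IsPal p) (ℓ : ℕ) :
    IsPal (p.take ℓ) ↔ IsPal (p.drop (p.length - ℓ)) := by
  have h : (p.take ℓ).reverse = p.drop (p.length - ℓ) := by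
    rw [List.reverse_take, hp]
  rw [← h, isPal_reverse]

lemma key {w : List α} {j ℓ : ℕ} (hj : j ≤ w.length) (hℓ : ℓ ≤ lpalAt w j) :
    IsPal (sfx w j ℓ) ↔ IsPal (sfx w (j - lpalAt w j + ℓ) ℓ) := by
  set L := lpalAt w j with hLdef
  obtain ⟨p, hps, hpp, hpl⟩ := lpalAt_mem w j
  have hLj : L ≤ j := lpalAt_le w j
  have hp_eq : p = (w.take j).drop (j - L) := by
    have := suffix_eq_drop hps
    rw [List.length_take, hpl] at this
    rw [this]; congr 1; omega
  have h1 : sfx w j ℓ = p.drop (L - ℓ) := by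
    rw [hp_eq, List.drop_drop, sfx]
    congr 1; omega
  have h2 : sfx w (j - L + ℓ) ℓ = p.take ℓ := by
    rw [hp_eq, List.take_drop, List.take_take, sfx]
    have : min (j - L + ℓ) j = j - L + ℓ := by omega
    rw [this]
    congr 1; omega
  rw [h1, h2, pal_take_iff_drop hpp, hpl]


lemma not_pal_of_gt {w : List α} {j ℓ : ℕ} (hj : j ≤ w.length) (hℓ : ℓ ≤ j)
    (hgt : lpalAt w j < ℓ) : ¬ IsPal (sfx w j ℓ) := by
  intro hp
  have := le_lpalAt (sfx_suffix w j ℓ) hp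
  rw [sfx_length hj hℓ] at this
  omega

lemma pal_sfx_lpal {w : List α} {j : ℕ} (hj : j ≤ w.length) :
    IsPal (sfx w j (lpalAt w j)) := by
  obtain ⟨p, hps, hpp, hpl⟩ := lpalAt_mem w j
  have := suffix_eq_sfx hj hps
  rw [hpl] at this
  rwa [← this]

lemma main_ind {x y : List α} (hlen : x.length = y.length)
    (h : ∀ m, 1 ≤ m → m ≤ x.length → lpalAt x m = lpalAt y m) :
    ∀ j, j ≤ x.length → ∀ ℓ, ℓ ≤ j → (IsPal (sfx x j ℓ) ↔ IsPal (sfx y j ℓ)) := by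
  intro j
  induction j using Nat.strong_induction_on with
  | _ j ih =>
    intro hj ℓ hℓ
    rcases Nat.eq_zero_or_pos ℓ with rfl | hℓ1
    · have e1 : sfx x j 0 = [] := by
        apply List.eq_nil_of_length_eq_zero
        exact sfx_length hj (Nat.zero_le _)
      have e2 : sfx y j 0 = [] := by
        apply List.eq_nil_of_length_eq_zero
        exact sfx_length (hlen ▸ hj) (Nat.zero_le _)
      rw [e1, e2]
    · have hjy : j ≤ y.length := hlen ▸ hj
      have hL : lpalAt y j = lpalAt x j := (h j (by omega) hj).symm
      have hLj : lpalAt x j ≤ j := lpalAt_le x j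
      have hL1 : 1 ≤ lpalAt x j := lpalAt_pos (by omega) hj
      rcases lt_trichotomy ℓ (lpalAt x j) with hlt | rfl | hgt
      · rw [key hj (le_of_lt hlt), key hjy (by omega)]
        rw [hL]
        exact ih (j - lpalAt x j + ℓ) (by omega) (by omega) ℓ (by omega)
      · constructor <;> intro _
        · rw [← hL] at *
          exact pal_sfx_lpal hjy
        · exact pal_sfx_lpal hj
      · constructor <;> intro hp
        · exact absurd hp (not_pal_of_gt hj hℓ hgt)
        · exact absurd hp (not_pal_of_gt hjy hℓ (by omega))

lemma sub_eq_sfx {w : List α} {i j : ℕ} (hi : 1 ≤ i) (hij : i ≤ j) :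
    sub w i j = sfx w j (j - i + 1) := by
  unfold sub sfx
  congr 1
  omega

lemma lpalAt_le_of_palMatch {x y : List α} (hpm : PalMatch x y) {i : ℕ}
    (h1 : 1 ≤ i) (h2 : i ≤ x.length) : lpalAt x i ≤ lpalAt y i := by
  obtain ⟨p, hps, hpp, hpl⟩ := lpalAt_mem x i
  set L := lpalAt x i with hLdef
  rcases le_or_gt L 1 with hL1 | hL2
  · exact le_trans hL1 (lpalAt_pos h1 (hpm.1 ▸ h2))
  · -- L ≥ 2, p = sfx x i L = sub x (i-L+1) i
    have hLi : L ≤ i := lpalAt_le x i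
    have hsub : sub x (i - L + 1) i = sfx x i L := by
      rw [sub_eq_sfx (by omega) (by omega)]
      congr 1
      omega
    have hpal_x : IsPal (sub x (i - L + 1) i) := by
      rw [hsub]
      exact pal_sfx_lpal h2
    have hpal_y : IsPal (sub y (i - L + 1) i) :=
      (hpm.2 (i - L + 1) i (by omega) (by omega) h2).mp hpal_x
    have hysub : sub y (i - L + 1) i = sfx y i L := by
      rw [sub_eq_sfx (by omega) (by omega)]
      congr 1
      omega
    rw [hysub] at hpal_y
    have := le_lpalAt (sfx_suffix y i L) hpal_y
    rwa [sfx_length (hpm.1 ▸ h2) hLi] at this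

lemma palMatch_symm {x y : List α} (hpm : PalMatch x y) : PalMatch y x :=
  ⟨hpm.1.symm, fun i j h1 h2 h3 => (hpm.2 i j h1 h2 (hpm.1 ▸ h3)).symm⟩

lemma lpal_length (w : List α) : (lpal w).length = w.length := by
  simp [lpal]

lemma lpal_getElem (w : List α) (k : ℕ) (hk : k < w.length) :
    (lpal w)[k]'(by rw [lpal_length]; exact hk) = lpalAt w (k + 1) := by
  simp [lpal]

end Aux

/-- Two strings pal-match iff they have the same lpal-encoding
(in particular, `lpal x = lpal y` forces `|x| = |y|`). -/
theorem stmt6 {α : Type*} (x y : List α) : PalMatch x y ↔ lpal x = lpal y := by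
  constructor
  · intro hpm
    apply List.ext_getElem
    · rw [Aux.lpal_length, Aux.lpal_length, hpm.1]
    · intro k hk1 hk2
      rw [Aux.lpal_length] at hk1 hk2
      rw [Aux.lpal_getElem x k hk1, Aux.lpal_getElem y k hk2]
      exact le_antisymm
        (Aux.lpalAt_le_of_palMatch hpm (by omega) (by omega))
        (Aux.lpalAt_le_of_palMatch (Aux.palMatch_symm hpm) (by omega) (by omega))
  · intro hlp
    have hlen : x.length = y.length := by
      have := congrArg List.length hlp
      rwa [Aux.lpal_length, Aux.lpal_length] at this
    have hAt : ∀ m, 1 ≤ m → m ≤ x.length → lpalAt x m = lpalAt y m := by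
      intro m h1 h2
      have hk : m - 1 < x.length := by omega
      have := Aux.lpal_getElem x (m - 1) hk
      have h2' := Aux.lpal_getElem y (m - 1) (hlen ▸ hk)
      have hg : (lpal x)[m-1]'(by rw [Aux.lpal_length]; exact hk)
          = (lpal y)[m-1]'(by rw [Aux.lpal_length]; exact hlen ▸ hk) := by
        simp only [hlp]
      rw [this, h2'] at hg
      have : m - 1 + 1 = m := by omega
      rwa [this] at hg
    refine ⟨hlen, fun i j hi hij hjx => ?_⟩
    rw [Aux.sub_eq_sfx hi (le_of_lt hij), Aux.sub_eq_sfx hi (le_of_lt hij)]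
    exact Aux.main_ind hlen hAt j hjx (j - i + 1) (by omega)
end

section
/- Let w be a string of length k ≥ 2 and let S be the set of palindromic suffixes u of w[1..k−1] (including the empty suffix) with |u| ≤ k−2 and w[k−1−|u|] = w[k]. Then w has a palindromic suffix of length at least 2 if and only if S is nonempty, and in that case the shortest palindromic suffix of w of length at least 2 has length |u₀| + 2 and equals w[k]·u₀·w[k], where u₀ is the shortest element of S. -/
open scoped ENat

variable {α : Type*}

lemma pal_wrap (c : α) {u : List α} (hu : IsPal u) : IsPal (c :: (u ++ [c])) := by
  unfold IsPal at *
  simp [hu]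

lemma pal_unwrap {a b : α} {u : List α} (h : IsPal (a :: (u ++ [b]))) :
    b = a ∧ IsPal u := by
  unfold IsPal at *
  have h' : b :: (u.reverse ++ [a]) = a :: (u ++ [b]) := by
    rw [← h]; simp
  rw [List.cons.injEq] at h'
  obtain ⟨hba, h2⟩ := h'
  rw [hba] at h2
  exact ⟨hba, (List.append_inj' h2 rfl).1⟩

lemma bwd {w : List α} {k : ℕ} (hk : 2 ≤ k) (hw : w.length = k) {u : List α}
    (h1 : u <:+ w.take (k - 1)) (h2 : u.length ≤ k - 2)
    (h4 : w[k - 2 - u.length]? = w[k - 1]?) :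
    ∃ c, w[k - 1]? = some c ∧ w.drop (k - (u.length + 2)) = c :: (u ++ [c]) := by
  have hlt : k - 1 < w.length := by omega
  set c := w[k - 1] with hcdef
  have hc : w[k - 1]? = some c := List.getElem?_eq_getElem hlt
  obtain ⟨p, hp⟩ := h1
  have hdropw : w.drop (k - 1) = [c] := by
    rw [List.drop_eq_getElem_cons hlt]
    have : w.drop (k - 1 + 1) = [] := by
      have : k - 1 + 1 = w.length := by omega
      rw [this, List.drop_length]
    rw [this]
  have hw2 : w = (p ++ u) ++ [c] := by
    conv_lhs => rw [← List.take_append_drop (k - 1) w]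
    rw [hdropw, hp]
  have hplen : p.length = k - 1 - u.length := by
    have := congrArg List.length hp
    rw [List.length_append, List.length_take, hw] at this
    omega
  have hpne : p ≠ [] := by
    intro h
    simp [h] at hplen
    omega
  have hlast : p.getLast hpne = c := by
    have hidx : w[k - 2 - u.length]? = some (p.getLast hpne) := by
      rw [hw2, List.append_assoc]
      rw [List.getElem?_append_left (by omega : k - 2 - u.length < p.length),
        show k - 2 - u.length = p.length - 1 by omega, List.getLast_eq_getElem,
        List.getElem?_eq_getElem (by omega : p.length - 1 < p.length)]
    rw [h4, hc] at hidx
    exact (Option.some_inj.mp hidx).symm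
  have hw3 : w = p.dropLast ++ (c :: (u ++ [c])) := by
    rw [hw2]
    conv_lhs => rw [← List.dropLast_append_getLast hpne, hlast]
    simp
  refine ⟨c, hc, ?_⟩
  have hdl : p.dropLast.length = k - (u.length + 2) := by
    rw [List.length_dropLast]
    omega
  rw [hw3, ← hdl, List.drop_left]

lemma fwd {w : List α} {k : ℕ} (hk : 2 ≤ k) (hw : w.length = k) {v : List α}
    (hv : v <:+ w) (hpal : IsPal v) (hl : 2 ≤ v.length) :
    ∃ c u, w[k - 1]? = some c ∧ v = c :: (u ++ [c]) ∧ u <:+ w.take (k - 1) ∧ IsPal u ∧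
      u.length ≤ k - 2 ∧ w[k - 2 - u.length]? = w[k - 1]? := by
  obtain ⟨a, t, rfl⟩ : ∃ a t, v = a :: t := by
    cases v with
    | nil => simp at hl
    | cons a t => exact ⟨a, t, rfl⟩
  have htne : t ≠ [] := by
    intro h; simp [h] at hl
  obtain ⟨u, b, rfl⟩ : ∃ u b, t = u ++ [b] :=
    ⟨t.dropLast, t.getLast htne, (List.dropLast_append_getLast htne).symm⟩
  obtain ⟨hba, hupal⟩ := pal_unwrap hpal
  subst hba
  obtain ⟨q, hq⟩ := hv
  have hw2 : w = (q ++ [b] ++ u) ++ [b] := by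
    rw [← hq]; simp
  have hlen : q.length + u.length + 2 = k := by
    have := congrArg List.length hw2
    rw [hw] at this
    simp at this
    omega
  have hL : (q ++ [b] ++ u).length = k - 1 := by simp; omega
  have hc : w[k - 1]? = some b := by
    rw [hw2, List.getElem?_append_right hL.le, hL]
    simp
  have hidx : w[k - 2 - u.length]? = some b := by
    have hw3 : w = q ++ (b :: (u ++ [b])) := hq.symm
    rw [hw3, List.getElem?_append_right (by omega : q.length ≤ k - 2 - u.length)]
    have : k - 2 - u.length - q.length = 0 := by omega
    rw [this]
    simp
  have htake : w.take (k - 1) = q ++ [b] ++ u := by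
    rw [hw2, List.take_left' hL]
  refine ⟨b, u, hc, by simp, ?_, hupal, by omega, by rw [hidx, hc]⟩
  rw [htake]
  exact ⟨q ++ [b], rfl⟩

/-- Characterization of the shortest nontrivial palindromic suffix of `w` (of length `k ≥ 2`)
via the set `S` of palindromic suffixes `u` of `w[1..k-1]` with `|u| ≤ k-2` and
`w[k-1-|u|] = w[k]`: it exists iff `S` is nonempty, and then it equals `w[k]·u₀·w[k]`
where `u₀` is the shortest element of `S`. -/
theorem stmt7 {α : Type*} (w : List α) (k : ℕ) (hk : 2 ≤ k) (hw : w.length = k)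
    (S : Set (List α))
    (hS : S = {u | u <:+ w.take (k - 1) ∧ IsPal u ∧ u.length ≤ k - 2 ∧
                   w[k - 2 - u.length]? = w[k - 1]?}) :
    ((∃ u : List α, u <:+ w ∧ IsPal u ∧ 2 ≤ u.length) ↔ S.Nonempty) ∧
    (∀ u₀ ∈ S, (∀ u ∈ S, u₀.length ≤ u.length) →
      sspAt w k = ((u₀.length + 2 : ℕ) : ℕ∞) ∧
      ∃ c, w[k - 1]? = some c ∧ w.drop (k - (u₀.length + 2)) = c :: (u₀ ++ [c])) := by
  constructor
  · constructor
    · rintro ⟨v, hv, hpal, hl⟩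
      obtain ⟨c, u, _, _, h3, h4, h5, h6⟩ := fwd hk hw hv hpal hl
      exact ⟨u, by rw [hS]; exact ⟨h3, h4, h5, h6⟩⟩
    · rintro ⟨u, hu⟩
      rw [hS] at hu
      obtain ⟨h1, h2, h3, h4⟩ := hu
      obtain ⟨c, hc, hdrop⟩ := bwd hk hw h1 h3 h4
      refine ⟨c :: (u ++ [c]), ?_, pal_wrap c h2, by simp⟩
      rw [← hdrop]
      exact List.drop_suffix _ _
  · intro u₀ hu₀ hmin
    have hu₀' := hu₀
    rw [hS] at hu₀'
    obtain ⟨h1, h2, h3, h4⟩ := hu₀'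
    obtain ⟨c, hc, hdrop⟩ := bwd hk hw h1 h3 h4
    refine ⟨?_, c, hc, hdrop⟩
    unfold sspAt
    rw [show w.take k = w by rw [← hw, List.take_length]]
    apply le_antisymm
    · apply sInf_le
      refine ⟨c :: (u₀ ++ [c]), ?_, pal_wrap c h2, by simp, ?_⟩
      · rw [← hdrop]; exact List.drop_suffix _ _
      · have h5 : (c :: (u₀ ++ [c])).length = u₀.length + 2 := by simp
        rw [h5]
    · apply le_sInf
      rintro ℓ ⟨v, hv1, hv2, hv3, rfl⟩
      obtain ⟨c', u, _, hveq, g3, g4, g5, g6⟩ := fwd hk hw hv1 hv2 hv3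
      have humem : u ∈ S := by rw [hS]; exact ⟨g3, g4, g5, g6⟩
      have := hmin u humem
      have hvlen : v.length = u.length + 2 := by rw [hveq]; simp
      rw [hvlen]
      exact_mod_cast by omega
end
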